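/- arXiv:1610.06309 — 9 statements merged into one kernel-verified Lean document; each statement's English description precedes it below -/
import Mathlib

section
/- Let A : ℕ → ℝ be a nondecreasing sequence of arrival times with A(0) = 0, and L : ℕ → ℝ a sequence of nonnegative service times. Define the start-of-service times by V(1) = A(1) and V(n) = max{A(n), V(n−1) + L(n−1)} for n ≥ 2, and the departure times by D(n) = V(n) + L(n). Then for all n ≥ 1, V(n) = max_{m ∈ [1,n]} { A(m) + Σ_{ν=m}^{n−1} L(ν) } and D(n) = max_{m ∈ [1,n]} { A(m) + Σ_{ν=m}^{n} L(ν) }; that is, a lossless work-conserving first-in first-out system is an exact max-plus server with service process S(m,n) = Σ_{ν=m}^{n} L(ν). -/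
/-!
Unrolling the recursion `V (n+1) = max (A (n+1)) (V n + L n)` is the max-plus analogue of
solving a linear recurrence: adding `L n` distributes over the maximum, so the induction step
extends every partial sum `∑_{ν ∈ [m, n)} L ν` by one term and contributes the new candidate
`A (n+1)` with an empty sum.
-/

open Finset

section MaxPlus

variable {α : Type*} [AddCommGroup α] [LinearOrder α] [IsOrderedAddMonoid α]

lemma sup'_sum_Ico_add_one (A L : ℕ → α) {n : ℕ} (hn : (Icc 1 n).Nonempty) :
    (Icc 1 n).sup' hn (fun m => A m + ∑ ν ∈ Ico m n, L ν) + L n =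
      (Icc 1 n).sup' hn fun m => A m + ∑ ν ∈ Ico m (n + 1), L ν := by
  rw [sup'_add]
  refine sup'_congr hn rfl fun m hm => ?_
  rw [sum_Ico_succ_top (mem_Icc.mp hm).2, add_assoc]

theorem eq_sup'_sum_Ico_of_workConserving (A L V : ℕ → α) (hV1 : V 1 = A 1)
    (hVrec : ∀ n, 1 ≤ n → V (n + 1) = max (A (n + 1)) (V n + L n)) :
    ∀ n (hn : 1 ≤ n),
      V n = (Icc 1 n).sup' (nonempty_Icc.mpr hn) fun m => A m + ∑ ν ∈ Ico m n, L ν := by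
  intro n hn
  induction n, hn using Nat.le_induction with
  | base => simp [hV1]
  | succ n hn ih =>
    rw [hVrec n hn, ih, sup'_sum_Ico_add_one,
      sup'_congr _ (insert_Icc_right_eq_Icc_add_one (by omega)).symm fun _ _ => rfl,
      sup'_insert, Ico_self, sum_empty, add_zero]

end MaxPlus

theorem work_conserving_exact_maxplus_server_general
    (A L V D : ℕ → ℝ)
    (hV1 : V 1 = A 1)
    (hVrec : ∀ n, 2 ≤ n → V n = max (A n) (V (n - 1) + L (n - 1)))
    (hD : ∀ n, D n = V n + L n) :
    ∀ n, ∀ hn : 1 ≤ n,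
      V n = (Finset.Icc 1 n).sup' (Finset.nonempty_Icc.mpr hn)
              (fun m => A m + ∑ ν ∈ Finset.Icc m (n - 1), L ν) ∧
      D n = (Finset.Icc 1 n).sup' (Finset.nonempty_Icc.mpr hn)
              (fun m => A m + ∑ ν ∈ Finset.Icc m n, L ν) := by
  intro n hn
  have hV := eq_sup'_sum_Ico_of_workConserving A L V hV1
    (fun k hk => by simpa using hVrec (k + 1) (by omega)) n hn
  have hn_min : ¬IsMin n := by simpa [isMin_iff_eq_bot] using Nat.one_le_iff_ne_zero.mp hn
  simp_rw [Icc_sub_one_right_eq_Ico_of_not_isMin hn_min]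
  refine ⟨hV, ?_⟩
  rw [hD, hV, sup'_sum_Ico_add_one]
  simp_rw [Ico_add_one_right_eq_Icc]

/-- **Work-conserving system is an exact max-plus server.**
`A` are nondecreasing arrival times with `A 0 = 0`, `L` nonnegative service times,
`V` the start-of-service times defined by the work-conserving FIFO recursion, and
`D n = V n + L n` the departure times.  Then for all `n ≥ 1`,
`V n = max_{m ∈ [1,n]} (A m + ∑_{ν=m}^{n-1} L ν)` and
`D n = max_{m ∈ [1,n]} (A m + ∑_{ν=m}^{n} L ν)`, i.e. the system is an exact
max-plus server with service process `S(m,n) = ∑_{ν=m}^{n} L ν`. -/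
theorem work_conserving_exact_maxplus_server
    (A L V D : ℕ → ℝ)
    (hA0 : A 0 = 0) (hAmono : Monotone A) (hL : ∀ n, 0 ≤ L n)
    (hV1 : V 1 = A 1)
    (hVrec : ∀ n, 2 ≤ n → V n = max (A n) (V (n - 1) + L (n - 1)))
    (hD : ∀ n, D n = V n + L n) :
    ∀ n, ∀ hn : 1 ≤ n,
      V n = (Finset.Icc 1 n).sup' (Finset.nonempty_Icc.mpr hn)
              (fun m => A m + ∑ ν ∈ Finset.Icc m (n - 1), L ν) ∧
      D n = (Finset.Icc 1 n).sup' (Finset.nonempty_Icc.mpr hn)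
              (fun m => A m + ∑ ν ∈ Finset.Icc m n, L ν) :=
  work_conserving_exact_maxplus_server_general A L V D hV1 hVrec hD
end

section
/- Let (a(ν))_{ν ≥ 1} be i.i.d. nonnegative random variables (inter-arrival times) and (L(ν))_{ν ≥ 1} be i.i.d. nonnegative random variables (service times), with the two families independent of each other. Define A(m,n) = Σ_{ν=m}^{n−1} a(ν), S(m,n) = Σ_{ν=m}^{n} L(ν), and the sojourn time T(n) = max_{m ∈ [1,n]} { S(m,n) − A(m,n) }. Fix θ > 0 such that E[exp(θ L(1))] · E[exp(−θ a(1))] ≤ 1. Then for all n ≥ 1 and all τ ≥ 0, P[T(n) > τ] ≤ E[exp(θ L(1))] · exp(−θτ). -/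
/-!
Read backwards from job `n`, the quantity `S(m, n) - A(m, n)` is a random walk whose first step
is `L n` and whose later steps `L ν - a ν` (`ν = n - 1, …, 1`) are independent of the past with
`E[exp (θ (L ν - a ν))] = E[exp (θ L 1)] E[exp (-θ a 1)] ≤ 1`. So the exponential
`exp (θ · walk)` is a nonnegative supermartingale with initial mean `E[exp (θ L n)]`, and Ville's
maximal inequality `ε P[max_k U k > ε] ≤ E[U 0]` at `ε = exp (θ τ)` bounds the probability that
the sojourn time, the running maximum of the walk, exceeds `τ`.
-/

open MeasureTheory ProbabilityTheory Real Finset Function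

namespace MeasureTheory

variable {Ω : Type*} {m0 : MeasurableSpace Ω} {μ : Measure Ω} [IsFiniteMeasure μ]

lemma setIntegral_inter_add_mul_measureReal_diff_le {s : Set Ω} {g : Ω → ℝ}
    (hs : MeasurableSet s) (hgm : Measurable g) (hg : Integrable g μ) (ε : ℝ) :
    ∫ ω in s ∩ {ω | g ω ≤ ε}, g ω ∂μ + ε * μ.real (s \ {ω | g ω ≤ ε}) ≤ ∫ ω in s, g ω ∂μ := by
  have hle : MeasurableSet {ω | g ω ≤ ε} := measurableSet_le hgm measurable_const
  have hbound : ε * μ.real (s \ {ω | g ω ≤ ε}) ≤ ∫ ω in s \ {ω | g ω ≤ ε}, g ω ∂μ :=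
    setIntegral_ge_of_const_le_real (hs.diff hle) (measure_ne_top μ _)
      (fun ω hω => (not_le.1 hω.2).le) hg.integrableOn
  rw [← integral_inter_add_sdiff (s := s) hle hg.integrableOn]
  linarith

theorem Supermartingale.setIntegral_add_mul_measureReal_compl_le {ℱ : Filtration ℕ m0}
    {f : ℕ → Ω → ℝ} (hf : Supermartingale f ℱ μ) (ε : ℝ) (N : ℕ) :
    ∫ ω in {ω | ∀ k < N, f k ω ≤ ε}, f N ω ∂μ + ε * μ.real {ω | ∀ k < N, f k ω ≤ ε}ᶜ
      ≤ ∫ ω, f 0 ω ∂μ := by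
  induction N with
  | zero => simp
  | succ N ih =>
    set G := {ω | ∀ k < N, f k ω ≤ ε}
    have hfm : ∀ k ≤ N, Measurable[ℱ N] (f k) := fun k hk =>
      ((hf.stronglyAdapted k).mono (ℱ.mono hk)).measurable
    have hG : MeasurableSet[ℱ N] G := by
      simp only [G, Set.ofPred_forall]
      exact .iInter fun k => .iInter fun hk => measurableSet_le (hfm k hk.le) measurable_const
    have hle : MeasurableSet[ℱ N] {ω | f N ω ≤ ε} :=
      measurableSet_le (hfm N le_rfl) measurable_const
    have hsucc : {ω | ∀ k < N + 1, f k ω ≤ ε} = G ∩ {ω | f N ω ≤ ε} := by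
      ext ω
      simp only [G, Set.mem_inter_iff, Set.mem_ofPred_eq]
      exact ⟨fun h => ⟨fun k hk => h k (by omega), h N (by omega)⟩,
        fun ⟨h, hN⟩ k hk => (Nat.lt_succ_iff_lt_or_eq.1 hk).elim (h k) (· ▸ hN)⟩
    have hstep := hf.setIntegral_le N.le_succ (hG.inter hle)
    have hsplit := setIntegral_inter_add_mul_measureReal_diff_le (ℱ.le N _ hG)
      ((hfm N le_rfl).mono (ℱ.le N) le_rfl) (hf.integrable N) ε
    have hmass := measureReal_inter_add_sdiff (μ := μ) (s := G) (ℱ.le N _ hle)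
    rw [hsucc, measureReal_compl ((ℱ.le N _ hG).inter (ℱ.le N _ hle))]
    rw [measureReal_compl (ℱ.le N _ hG), ← hmass] at ih
    linarith

/-- Ville's maximal inequality, over a finite horizon. -/
theorem Supermartingale.mul_measureReal_exists_lt_le {ℱ : Filtration ℕ m0} {f : ℕ → Ω → ℝ}
    (hf : Supermartingale f ℱ μ) (hnonneg : ∀ k, 0 ≤ f k) (ε : ℝ) (N : ℕ) :
    ε * μ.real {ω | ∃ k < N, ε < f k ω} ≤ ∫ ω, f 0 ω ∂μ := by
  have hcompl : {ω | ∃ k < N, ε < f k ω} = {ω | ∀ k < N, f k ω ≤ ε}ᶜ := by ext; simp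
  have hpos : 0 ≤ ∫ ω in {ω | ∀ k < N, f k ω ≤ ε}, f N ω ∂μ :=
    integral_nonneg fun ω => hnonneg N ω
  rw [hcompl]
  linarith [hf.setIntegral_add_mul_measureReal_compl_le ε N]

end MeasureTheory

namespace ProbabilityTheory

variable {Ω : Type*} {m0 : MeasurableSpace Ω} {μ : Measure Ω}

lemma Indep.indepFun_of_measurable {β γ : Type*} [MeasurableSpace β] [MeasurableSpace γ]
    {m₁ m₂ : MeasurableSpace Ω} {f : Ω → β} {g : Ω → γ}
    (h : Indep m₁ m₂ μ) (hf : Measurable[m₁] f) (hg : Measurable[m₂] g) : IndepFun f g μ := by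
  rw [IndepFun_iff_Indep]
  exact indep_of_indep_of_le h hf.comap_le hg.comap_le

theorem supermartingale_prod_range_of_indep [IsFiniteMeasure μ] {ℱ : Filtration ℕ m0}
    {ξ : ℕ → Ω → ℝ} (hadapted : StronglyAdapted ℱ ξ) (hnonneg : ∀ k, 0 ≤ ξ k)
    (hindep : ∀ k, Indep (MeasurableSpace.comap (ξ (k + 1)) inferInstance) (ℱ k) μ)
    (hint : ∀ k, Integrable (ξ k) μ) (hmean : ∀ k, ∫ ω, ξ (k + 1) ω ∂μ ≤ 1) :
    Supermartingale (fun k => ∏ j ∈ range (k + 1), ξ j) ℱ μ := by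
  set U : ℕ → Ω → ℝ := fun k => ∏ j ∈ range (k + 1), ξ j
  have hU_succ : ∀ k, U (k + 1) = U k * ξ (k + 1) := fun k => prod_range_succ _ _
  have hU_adapted : StronglyAdapted ℱ U := fun k =>
    Finset.stronglyMeasurable_prod _ fun j hj =>
      (hadapted j).mono (ℱ.mono (Nat.lt_succ_iff.1 (mem_range.1 hj)))
  have hU_indep : ∀ k, IndepFun (U k) (ξ (k + 1)) μ := fun k =>
    (hindep k).symm.indepFun_of_measurable (hU_adapted k).measurable (comap_measurable _)
  have hU_int : ∀ k, Integrable (U k) μ := by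
    intro k
    induction k with
    | zero => simpa [U] using hint 0
    | succ k ih => rw [hU_succ]; exact (hU_indep k).integrable_mul ih (hint _)
  refine supermartingale_nat hU_adapted hU_int fun k => ?_
  have hpull := condExp_mul_of_stronglyMeasurable_left (hU_adapted k)
    ((hU_indep k).integrable_mul (hU_int k) (hint _)) (hint (k + 1))
  have hξ := condExp_indep_eq ((hadapted (k + 1)).measurable.comap_le.trans (ℱ.le _))
    (ℱ.le k) (comap_measurable (ξ (k + 1))).stronglyMeasurable (hindep k)
  filter_upwards [hpull, hξ] with ω hpull hξ
  have hU_nonneg : 0 ≤ U k ω := by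
    simpa only [U, Finset.prod_apply] using prod_nonneg fun j _ => hnonneg j ω
  rw [hU_succ, hpull, Pi.mul_apply, hξ]
  exact mul_le_of_le_one_right hU_nonneg (hmean k)

theorem measureReal_exists_lt_sum_range_le [IsFiniteMeasure μ] {ℱ : Filtration ℕ m0}
    {X : ℕ → Ω → ℝ} {θ : ℝ} (hθ : 0 < θ) (hadapted : StronglyAdapted ℱ X)
    (hindep : ∀ k, Indep (MeasurableSpace.comap (X (k + 1)) inferInstance) (ℱ k) μ)
    (hint : ∀ k, Integrable (fun ω => exp (θ * X k ω)) μ) (hmgf : ∀ k, mgf (X (k + 1)) μ θ ≤ 1)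
    (t : ℝ) (N : ℕ) :
    μ.real {ω | ∃ k < N, t < ∑ j ∈ range (k + 1), X j ω} ≤ mgf (X 0) μ θ * exp (-θ * t) := by
  have hexp : Continuous fun x => exp (θ * x) := by fun_prop
  have hsuper := supermartingale_prod_range_of_indep (μ := μ) (ξ := fun k ω => exp (θ * X k ω))
    (fun k => hexp.comp_stronglyMeasurable (hadapted k)) (fun k ω => (exp_pos _).le)
    (fun k => indep_of_indep_of_le_left (hindep k)
      (hexp.measurable.comp (comap_measurable _)).comap_le) hint hmgf
  have hville := hsuper.mul_measureReal_exists_lt_le (fun k ω => by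
    simpa only [Finset.prod_apply, Pi.zero_apply] using
      prod_nonneg fun j _ => (exp_pos (θ * X j ω)).le) (exp (θ * t)) N
  have hevent : {ω | ∃ k < N, t < ∑ j ∈ range (k + 1), X j ω}
      = {ω | ∃ k < N, exp (θ * t) < (∏ j ∈ range (k + 1), fun ω => exp (θ * X j ω)) ω} := by
    ext ω
    simp only [Set.mem_ofPred_eq, Finset.prod_apply, ← exp_sum, ← mul_sum, exp_lt_exp,
      mul_lt_mul_iff_right₀ hθ]
  have hstart : ∫ ω, (∏ j ∈ range (0 + 1), fun ω => exp (θ * X j ω)) ω ∂μ = mgf (X 0) μ θ := by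
    simp [mgf]
  rw [hevent, neg_mul, exp_neg, ← div_eq_mul_inv, le_div_iff₀ (exp_pos _), mul_comm]
  exact hville.trans hstart.le

lemma iIndepFun.sum_elim {ι κ β : Type*} [MeasurableSpace β] {f : ι → Ω → β} {g : κ → Ω → β}
    (hf : iIndepFun f μ) (hg : iIndepFun g μ)
    (hfg : IndepFun (fun ω i => f i ω) (fun ω j => g j ω) μ) : iIndepFun (Sum.elim f g) μ := by
  classical
  refine (iIndepFun_iff _ _ _).2 fun s t ht => ?_
  have hinter : ⋂ p ∈ s, t p = (⋂ i ∈ s.toLeft, t (.inl i)) ∩ ⋂ j ∈ s.toRight, t (.inr j) := by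
    ext ω; simp [Sum.forall]
  have hf_meas : MeasurableSet[MeasurableSpace.comap (fun ω i => f i ω) inferInstance]
      (⋂ i ∈ s.toLeft, t (.inl i)) :=
    measurableSet_biInter _ fun i hi =>
      ((measurable_pi_apply i).comp (comap_measurable _)).comap_le _ (ht _ (mem_toLeft.1 hi))
  have hg_meas : MeasurableSet[MeasurableSpace.comap (fun ω j => g j ω) inferInstance]
      (⋂ j ∈ s.toRight, t (.inr j)) :=
    measurableSet_biInter _ fun j hj =>
      ((measurable_pi_apply j).comp (comap_measurable _)).comap_le _ (ht _ (mem_toRight.1 hj))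
  rw [hinter, hfg.meas_inter hf_meas hg_meas,
    hf.meas_biInter fun i hi => ht _ (mem_toLeft.1 hi),
    hg.meas_biInter fun j hj => ht _ (mem_toRight.1 hj)]
  conv_rhs => rw [← s.toLeft_disjSum_toRight, prod_disjSum]

lemma iIndepFun.indep_comap_natural_of_disjoint {ι β : Type*} [MeasurableSpace β]
    {Z : ι → Ω → β} (hZ : iIndepFun Z μ) (hZm : ∀ p, Measurable (Z p))
    {W : ℕ → Ω → ℝ} (hWm : ∀ k, StronglyMeasurable (W k)) {blk : ℕ → Set ι}
    (hblk : Pairwise (Disjoint on blk))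
    (hW : ∀ k, MeasurableSpace.comap (W k) inferInstance
      ≤ ⨆ p ∈ blk k, MeasurableSpace.comap (Z p) inferInstance) (k : ℕ) :
    Indep (MeasurableSpace.comap (W (k + 1)) inferInstance) (Filtration.natural W hWm k) μ := by
  have hdisj : Disjoint (blk (k + 1)) (⋃ j ≤ k, blk j) :=
    Set.disjoint_iUnion₂_right.2 fun j hj => hblk (by omega)
  refine indep_of_indep_of_le
    (indep_iSup_of_disjoint (fun p => (hZm p).comap_le) hZ.iIndep hdisj) (hW (k + 1)) ?_
  exact iSup₂_le fun j hj => (hW j).trans <|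
    biSup_mono fun p hp => Set.mem_iUnion₂.2 ⟨j, hj, hp⟩

lemma IndepFun.mgf_sub {X Y : Ω → ℝ} {t : ℝ} (h : IndepFun X Y μ) (hX : AEStronglyMeasurable X μ)
    (hY : AEStronglyMeasurable Y μ) : mgf (X - Y) μ t = mgf X μ t * mgf Y μ (-t) := by
  rw [sub_eq_add_neg, h.neg_right.mgf_add' hX hY.neg, mgf_neg]

lemma integrable_exp_mul_sub {X Y : Ω → ℝ} {θ : ℝ} (hθ : 0 ≤ θ)
    (hX : Integrable (fun ω => exp (θ * X ω)) μ) (hXm : Measurable X) (hYm : Measurable Y)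
    (hY : ∀ ω, 0 ≤ Y ω) : Integrable (fun ω => exp (θ * (X ω - Y ω))) μ :=
  hX.mono' (by fun_prop) <| ae_of_all _ fun ω => by
    rw [norm_of_nonneg (exp_pos _).le, exp_le_exp]
    nlinarith [hY ω]

end ProbabilityTheory

/-- `k ↦ n - k` on `[0, n)`, continued injectively by `k ↦ k + 1` so that every step of the
reversed walk below, also beyond the horizon `n`, uses its own job index `≥ 1`. -/
def revIndex (n k : ℕ) : ℕ := if k < n then n - k else k + 1

lemma revIndex_of_lt {n k : ℕ} (hk : k < n) : revIndex n k = n - k := if_pos hk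

lemma one_le_revIndex (n k : ℕ) : 1 ≤ revIndex n k := by
  unfold revIndex; split_ifs <;> omega

lemma revIndex_injective (n : ℕ) : Injective (revIndex n) := by
  intro j k h
  unfold revIndex at h
  split_ifs at h <;> omega

section revIncrement

variable {Ω : Type*} (a L : ℕ → Ω → ℝ) (n : ℕ)

/-- Steps of the sojourn-time walk read backwards from job `n`: first `L n`, then `L ν - a ν`
for `ν = n - 1, n - 2, …`, so that the partial sums are `S(n - k, n) - A(n - k, n)`. -/
def revIncrement (k : ℕ) (ω : Ω) : ℝ :=
  L (revIndex n k) ω - if k = 0 then 0 else a (revIndex n k) ω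

variable {a L n}

lemma revIncrement_zero : revIncrement a L n 0 = L (revIndex n 0) := by
  ext ω; simp [revIncrement]

lemma revIncrement_succ (k : ℕ) :
    revIncrement a L n (k + 1) = L (revIndex n (k + 1)) - a (revIndex n (k + 1)) := by
  ext ω; simp [revIncrement]

lemma measurable_revIncrement {m : MeasurableSpace Ω} {k : ℕ}
    (ha : Measurable[m] (a (revIndex n k))) (hL : Measurable[m] (L (revIndex n k))) :
    Measurable[m] (revIncrement a L n k) := by
  unfold revIncrement
  split_ifs
  exacts [hL.sub measurable_const, hL.sub ha]

lemma sum_range_revIncrement {k : ℕ} (hk : k < n) (ω : Ω) :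
    ∑ j ∈ range (k + 1), revIncrement a L n j ω
      = (∑ ν ∈ Icc (n - k) n, L ν ω) - ∑ ν ∈ Icc (n - k) (n - 1), a ν ω := by
  induction k with
  | zero => simp [revIncrement, revIndex_of_lt hk, Icc_eq_empty_of_lt (Nat.sub_one_lt_of_lt hk)]
  | succ k ih =>
    rw [sum_range_succ, ih (by omega), revIncrement, if_neg k.succ_ne_zero, revIndex_of_lt hk,
      ← add_sum_Ioc_eq_sum_Icc (by omega : n - (k + 1) ≤ n),
      ← add_sum_Ioc_eq_sum_Icc (by omega : n - (k + 1) ≤ n - 1),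
      ← Icc_add_one_left_eq_Ioc, ← Icc_add_one_left_eq_Ioc, show n - (k + 1) + 1 = n - k by omega]
    ring

lemma lt_sup'_Icc_iff_exists_lt_sum_range_revIncrement (hn : 1 ≤ n) (τ : ℝ) (ω : Ω) :
    τ < (Icc 1 n).sup' (nonempty_Icc.mpr hn)
        (fun m => (∑ ν ∈ Icc m n, L ν ω) - ∑ ν ∈ Icc m (n - 1), a ν ω)
      ↔ ∃ k < n, τ < ∑ j ∈ range (k + 1), revIncrement a L n j ω := by
  rw [lt_sup'_iff]
  constructor
  · rintro ⟨m, hm, hτm⟩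
    obtain ⟨hm1, hmn⟩ := mem_Icc.1 hm
    refine ⟨n - m, by omega, ?_⟩
    rwa [sum_range_revIncrement (by omega), Nat.sub_sub_self hmn]
  · rintro ⟨k, hk, hτk⟩
    exact ⟨n - k, mem_Icc.2 ⟨by omega, by omega⟩, by rwa [← sum_range_revIncrement hk]⟩

end revIncrement

section

variable {Ω : Type*} [MeasurableSpace Ω] {μ : Measure Ω} {a L : ℕ → Ω → ℝ}

lemma indep_comap_revIncrement_natural (hameas : ∀ ν, Measurable (a ν))
    (hLmeas : ∀ ν, Measurable (L ν)) (haiid : iIndepFun a μ) (hLiid : iIndepFun L μ)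
    (hindep : IndepFun (fun ω (ν : ℕ) => a ν ω) (fun ω (ν : ℕ) => L ν ω) μ) (n : ℕ)
    (hWm : ∀ k, StronglyMeasurable (revIncrement a L n k)) (k : ℕ) :
    Indep (MeasurableSpace.comap (revIncrement a L n (k + 1)) inferInstance)
      (Filtration.natural (revIncrement a L n) hWm k) μ := by
  set blk : ℕ → Set (ℕ ⊕ ℕ) := fun k => {.inl (revIndex n k), .inr (revIndex n k)}
  have hblock : ∀ k, ∀ p ∈ blk k,
      Measurable[⨆ p ∈ blk k, MeasurableSpace.comap (Sum.elim a L p) inferInstance]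
        (Sum.elim a L p) := fun k p hp =>
    (comap_measurable _).mono (le_biSup (fun p => MeasurableSpace.comap (Sum.elim a L p) _) hp)
      le_rfl
  refine (haiid.sum_elim hLiid hindep).indep_comap_natural_of_disjoint
    (by rintro (ν | ν); exacts [hameas ν, hLmeas ν]) hWm (fun j k hjk => ?_)
    (fun k => (measurable_revIncrement (hblock k (.inl _) (by simp [blk]))
      (hblock k (.inr _) (by simp [blk]))).comap_le) k
  simp [blk, (revIndex_injective n).ne hjk.symm]

lemma integrable_exp_mul_revIncrement (hameas : ∀ ν, Measurable (a ν))
    (hLmeas : ∀ ν, Measurable (L ν)) (hanonneg : ∀ ν ω, 0 ≤ a ν ω)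
    (hLid : ∀ ν, 1 ≤ ν → IdentDistrib (L ν) (L 1) μ μ) {θ : ℝ} (hθ : 0 ≤ θ)
    (hint : Integrable (fun ω => exp (θ * L 1 ω)) μ) (n k : ℕ) :
    Integrable (fun ω => exp (θ * revIncrement a L n k ω)) μ := by
  have hLint : Integrable (fun ω => exp (θ * L (revIndex n k) ω)) μ :=
    ((hLid _ (one_le_revIndex n k)).comp
      (by fun_prop : Measurable fun x => exp (θ * x))).integrable_iff.2 hint
  cases k with
  | zero => rwa [revIncrement_zero]
  | succ k =>
    rw [revIncrement_succ]
    exact integrable_exp_mul_sub hθ hLint (hLmeas _) (hameas _) (hanonneg _)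

lemma mgf_revIncrement_succ_le_one (hameas : ∀ ν, Measurable (a ν))
    (hLmeas : ∀ ν, Measurable (L ν)) (haid : ∀ ν, 1 ≤ ν → IdentDistrib (a ν) (a 1) μ μ)
    (hLid : ∀ ν, 1 ≤ ν → IdentDistrib (L ν) (L 1) μ μ)
    (hindep : IndepFun (fun ω (ν : ℕ) => a ν ω) (fun ω (ν : ℕ) => L ν ω) μ) {θ : ℝ}
    (hstab : mgf (L 1) μ θ * mgf (a 1) μ (-θ) ≤ 1) (n k : ℕ) :
    mgf (revIncrement a L n (k + 1)) μ θ ≤ 1 := by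
  have hν := one_le_revIndex n (k + 1)
  have hLa : IndepFun (L (revIndex n (k + 1))) (a (revIndex n (k + 1))) μ :=
    (hindep.comp (measurable_pi_apply _) (measurable_pi_apply _)).symm
  rwa [revIncrement_succ, hLa.mgf_sub (hLmeas _).aestronglyMeasurable
    (hameas _).aestronglyMeasurable, mgf_congr_identDistrib (hLid _ hν),
    mgf_congr_identDistrib (haid _ hν)]

end

theorem gigi1_sojourn_bound_general
    {Ω : Type*} [MeasurableSpace Ω] (μ : Measure Ω) [IsProbabilityMeasure μ]
    (a L : ℕ → Ω → ℝ)
    (hameas : ∀ ν, Measurable (a ν)) (hLmeas : ∀ ν, Measurable (L ν))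
    (hanonneg : ∀ ν ω, 0 ≤ a ν ω)
    (haiid : iIndepFun a μ)
    (haid : ∀ ν, 1 ≤ ν → IdentDistrib (a ν) (a 1) μ μ)
    (hLiid : iIndepFun L μ)
    (hLid : ∀ ν, 1 ≤ ν → IdentDistrib (L ν) (L 1) μ μ)
    (hindep : IndepFun (fun ω (ν : ℕ) => a ν ω) (fun ω (ν : ℕ) => L ν ω) μ)
    (θ : ℝ) (hθ : 0 < θ)
    (hint : Integrable (fun ω => exp (θ * L 1 ω)) μ)
    (hstab : (∫ ω, exp (θ * L 1 ω) ∂μ) * (∫ ω, exp (-θ * a 1 ω) ∂μ) ≤ 1) :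
    ∀ n : ℕ, ∀ hn : 1 ≤ n, ∀ τ : ℝ, 0 ≤ τ →
      μ {ω | τ < (Finset.Icc 1 n).sup' (Finset.nonempty_Icc.mpr hn)
          (fun m => (∑ ν ∈ Finset.Icc m n, L ν ω) - ∑ ν ∈ Finset.Icc m (n - 1), a ν ω)}
        ≤ ENNReal.ofReal ((∫ ω, exp (θ * L 1 ω) ∂μ) * exp (-θ * τ)) := by
  intro n hn τ _
  have hWm : ∀ k, StronglyMeasurable (revIncrement a L n k) := fun k =>
    (measurable_revIncrement (hameas _) (hLmeas _)).stronglyMeasurable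
  have hbound := measureReal_exists_lt_sum_range_le hθ (Filtration.stronglyAdapted_natural hWm)
    (indep_comap_revIncrement_natural hameas hLmeas haiid hLiid hindep n hWm)
    (integrable_exp_mul_revIncrement hameas hLmeas hanonneg hLid hθ.le hint n)
    (mgf_revIncrement_succ_le_one hameas hLmeas haid hLid hindep hstab n) τ n
  rw [revIncrement_zero, revIndex_of_lt hn, Nat.sub_zero, mgf_congr_identDistrib (hLid n hn),
    ← Set.ext fun ω => lt_sup'_Icc_iff_exists_lt_sum_range_revIncrement hn τ ω] at hbound
  exact (ENNReal.le_ofReal_iff_toReal_le (measure_ne_top _ _)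
    (mul_nonneg (integral_nonneg fun _ => (exp_pos _).le) (exp_pos _).le)).2 hbound

/-- **Kingman-type sojourn time bound for the GI|GI|1 queue.**
For i.i.d. inter-arrival times `a` and i.i.d. service times `L`, independent of each other,
and `θ > 0` with `E[exp (θ L 1)] · E[exp (-θ a 1)] ≤ 1`, the sojourn time
`T n = max_{m ∈ [1,n]} (∑_{ν=m}^{n} L ν - ∑_{ν=m}^{n-1} a ν)` satisfies
`P[T n > τ] ≤ E[exp (θ L 1)] · exp (-θ τ)`. -/
theorem gigi1_sojourn_bound
    {Ω : Type*} [MeasurableSpace Ω] (μ : Measure Ω) [IsProbabilityMeasure μ]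
    (a L : ℕ → Ω → ℝ)
    (hameas : ∀ ν, Measurable (a ν)) (hLmeas : ∀ ν, Measurable (L ν))
    (hanonneg : ∀ ν ω, 0 ≤ a ν ω) (hLnonneg : ∀ ν ω, 0 ≤ L ν ω)
    (haiid : iIndepFun a μ)
    (haid : ∀ ν, 1 ≤ ν → IdentDistrib (a ν) (a 1) μ μ)
    (hLiid : iIndepFun L μ)
    (hLid : ∀ ν, 1 ≤ ν → IdentDistrib (L ν) (L 1) μ μ)
    (hindep : IndepFun (fun ω (ν : ℕ) => a ν ω) (fun ω (ν : ℕ) => L ν ω) μ)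
    (θ : ℝ) (hθ : 0 < θ)
    (hint : Integrable (fun ω => exp (θ * L 1 ω)) μ)
    (hstab : (∫ ω, exp (θ * L 1 ω) ∂μ) * (∫ ω, exp (-θ * a 1 ω) ∂μ) ≤ 1) :
    ∀ n : ℕ, ∀ hn : 1 ≤ n, ∀ τ : ℝ, 0 ≤ τ →
      μ {ω | τ < (Finset.Icc 1 n).sup' (Finset.nonempty_Icc.mpr hn)
          (fun m => (∑ ν ∈ Finset.Icc m n, L ν ω) - ∑ ν ∈ Finset.Icc m (n - 1), a ν ω)}
        ≤ ENNReal.ofReal ((∫ ω, exp (θ * L 1 ω) ∂μ) * exp (-θ * τ)) :=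
  gigi1_sojourn_bound_general μ a L hameas hLmeas hanonneg haiid haid hLiid hLid hindep θ hθ hint
    hstab
end

section
/- Let (a(ν))_{ν ≥ 1} be i.i.d. nonnegative random variables (inter-arrival times) and (L(ν))_{ν ≥ 1} be i.i.d. nonnegative random variables (service times), with the two families independent of each other. Define A(m,n) = Σ_{ν=m}^{n−1} a(ν), S(m,n) = Σ_{ν=m}^{n} L(ν), and the waiting time W(n) = [ sup_{m ∈ [1,n−1]} { S(m,n−1) − A(m,n) } ]⁺ (supremum of the empty set is 0). Fix θ > 0 such that E[exp(θ L(1))] · E[exp(−θ a(1))] ≤ 1. Then for all n ≥ 1 and all τ ≥ 0, P[W(n) > τ] ≤ exp(−θτ). -/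
/-!
The waiting time is dominated by Lindley's recursion `V k = max 0 (V (k - 1) + X k)` driven by
the increments `X ν = L ν - a ν`. By induction on `k`, `P[V k > s] ≤ exp (-θ s)` for every
real `s`: as `V (k - 1)` is independent of `X k`, conditioning on `X k` gives
`P[V (k - 1) + X k > s] ≤ E[exp (-θ (s - X k))] = exp (-θ s) E[exp (θ X k)]`, and
`E[exp (θ X k)] = E[exp (θ L 1)] E[exp (-θ a 1)] ≤ 1`.
-/

open MeasureTheory ProbabilityTheory Real

def lindley (x : ℕ → ℝ) : ℕ → ℝ
  | 0 => 0
  | n + 1 => max 0 (lindley x n + x (n + 1))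

lemma lindley_nonneg (x : ℕ → ℝ) : ∀ n, 0 ≤ lindley x n
  | 0 => le_rfl
  | _ + 1 => le_max_left _ _

lemma sum_Icc_le_lindley (x : ℕ → ℝ) {m : ℕ} (hm : 1 ≤ m) :
    ∀ {N : ℕ}, m ≤ N → ∑ ν ∈ Finset.Icc m N, x ν ≤ lindley x N
  | 0, hmN => by omega
  | N + 1, hmN => by
    rw [Finset.sum_Icc_succ_top hmN, lindley]
    refine le_max_of_le_right (add_le_add_left ?_ _)
    rcases Nat.lt_or_ge N m with hNm | hmN'
    · simpa [Finset.Icc_eq_empty_of_lt hNm] using lindley_nonneg x N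
    · exact sum_Icc_le_lindley x hm hmN'

lemma iSup_sum_Icc_le_lindley (x : ℕ → ℝ) (N : ℕ) :
    ⨆ m ∈ Finset.Icc 1 N, ∑ ν ∈ Finset.Icc m N, x ν ≤ lindley x N := by
  refine Real.iSup_le (fun m => Real.iSup_le (fun hm => ?_) (lindley_nonneg x N))
    (lindley_nonneg x N)
  rw [Finset.mem_Icc] at hm
  exact sum_Icc_le_lindley x hm.1 hm.2

lemma measurable_lindley {Ω : Type*} {m : MeasurableSpace Ω} {X : ℕ → Ω → ℝ} :
    ∀ {n : ℕ}, (∀ ν ≤ n, Measurable[m] (X ν)) →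
      Measurable[m] (fun ω => lindley (X · ω) n)
  | 0, _ => measurable_const
  | n + 1, hX => measurable_const.max
      ((measurable_lindley fun ν hν => hX ν (by omega)).add (hX (n + 1) le_rfl))

section
variable {Ω : Type*} [MeasurableSpace Ω] {μ : Measure Ω}

lemma ProbabilityTheory.iIndepFun.indepFun_lindley {X : ℕ → Ω → ℝ}
    (hX : ∀ ν, Measurable (X ν)) (hindep : iIndepFun X μ) (n : ℕ) :
    IndepFun (fun ω => lindley (X · ω) n) (X (n + 1)) μ := by
  have hpast_future := indep_iSup_of_disjoint (fun ν => (hX ν).comap_le) hindep.iIndep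
    (S := Set.Iic n) (T := {n + 1}) (by simp)
  rw [IndepFun_iff_Indep]
  refine indep_of_indep_of_le_right (indep_of_indep_of_le_left hpast_future ?_) ?_
  · exact (measurable_lindley fun ν hν =>
      (comap_measurable (X ν)).mono
        (le_biSup (fun i => MeasurableSpace.comap (X i) _) (Set.mem_Iic.2 hν)) le_rfl).comap_le
  · simp

lemma measure_lt_add_le_of_indepFun [IsFiniteMeasure μ] {V Y : Ω → ℝ} (hV : Measurable V)
    (hY : Measurable Y) (hVY : IndepFun V Y μ) {θ : ℝ}
    (htail : ∀ s, μ {ω | s < V ω} ≤ ENNReal.ofReal (exp (-θ * s))) (s : ℝ) :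
    μ {ω | s < V ω + Y ω}
      ≤ ENNReal.ofReal (exp (-θ * s)) * ∫⁻ ω, ENNReal.ofReal (exp (θ * Y ω)) ∂μ := by
  have hset : MeasurableSet {p : ℝ × ℝ | s < p.1 + p.2} :=
    measurableSet_lt measurable_const (measurable_fst.add measurable_snd)
  calc μ {ω | s < V ω + Y ω}
      = ((μ.map V).prod (μ.map Y)) {p | s < p.1 + p.2} := by
        rw [← hVY.map_prod_eq_prod_map_map hV.aemeasurable hY.aemeasurable,
          Measure.map_apply (hV.prodMk hY) hset]
        rfl
    _ = ∫⁻ ω, μ {ω' | s - Y ω < V ω'} ∂μ := by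
        rw [Measure.prod_apply_symm hset,
          lintegral_map (measurable_measure_prodMk_right hset) hY]
        congr with ω
        rw [Measure.map_apply hV (hset.preimage measurable_prodMk_right)]
        congr 1
        ext ω'
        simp [sub_lt_iff_lt_add]
    _ ≤ ∫⁻ ω, ENNReal.ofReal (exp (-θ * s)) * ENNReal.ofReal (exp (θ * Y ω)) ∂μ := by
        refine lintegral_mono fun ω => (htail _).trans_eq ?_
        rw [← ENNReal.ofReal_mul (exp_nonneg _), ← exp_add]
        ring_nf
    _ = _ := lintegral_const_mul _ (ENNReal.measurable_ofReal.comp (by fun_prop))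

theorem measure_lt_lindley_le {X : ℕ → Ω → ℝ} (hX : ∀ ν, Measurable (X ν))
    (hindep : iIndepFun X μ) {θ : ℝ} (hθ : 0 ≤ θ)
    (hmgf : ∀ n, ∫⁻ ω, ENNReal.ofReal (exp (θ * X (n + 1) ω)) ∂μ ≤ 1)
    (n : ℕ) (s : ℝ) :
    μ {ω | s < lindley (X · ω) n} ≤ ENNReal.ofReal (exp (-θ * s)) := by
  have := hindep.isProbabilityMeasure
  have h_neg : ∀ s < 0, ∀ E : Set Ω, μ E ≤ ENNReal.ofReal (exp (-θ * s)) := fun s hs E =>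
    prob_le_one.trans (ENNReal.one_le_ofReal.2 (one_le_exp (by nlinarith)))
  induction n generalizing s with
  | zero =>
    rcases lt_or_ge s 0 with hs | hs
    · exact h_neg s hs _
    · simp [lindley, hs.not_gt]
  | succ n ih =>
    rcases lt_or_ge s 0 with hs | hs
    · exact h_neg s hs _
    calc μ {ω | s < lindley (X · ω) (n + 1)}
        ≤ μ {ω | s < lindley (X · ω) n + X (n + 1) ω} :=
          measure_mono fun ω hω => (lt_max_iff.1 hω).resolve_left hs.not_gt
      _ ≤ ENNReal.ofReal (exp (-θ * s))
            * ∫⁻ ω, ENNReal.ofReal (exp (θ * X (n + 1) ω)) ∂μ :=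
          measure_lt_add_le_of_indepFun (measurable_lindley fun ν _ => hX ν) (hX (n + 1))
            (hindep.indepFun_lindley hX n) ih s
      _ ≤ ENNReal.ofReal (exp (-θ * s)) := mul_le_of_le_one_right' (hmgf n)

lemma iIndepFun_fin_two_of_indepFun [IsProbabilityMeasure μ] {β : Type*} [MeasurableSpace β]
    {f : Fin 2 → Ω → β} (hf : ∀ i, Measurable (f i)) (h : IndepFun (f 0) (f 1) μ) :
    iIndepFun f μ := by
  rw [iIndepFun_iff_map_fun_eq_pi_map fun i => (hf i).aemeasurable]
  apply (MeasurableEquiv.piFinTwo fun _ => β).map_measurableEquiv_injective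
  rw [(measurePreserving_piFinTwo _).map_eq,
    Measure.map_map (MeasurableEquiv.measurable _) (measurable_pi_iff.2 hf)]
  exact h.map_prod_eq_prod_map_map (hf 0).aemeasurable (hf 1).aemeasurable

lemma ProbabilityTheory.iIndepFun.curry {ι κ β : Type*} [MeasurableSpace β]
    {Y : ι × κ → Ω → β} (hY : ∀ p, Measurable (Y p)) (h : iIndepFun Y μ) :
    iIndepFun (fun i ω j => Y (i, j) ω) μ := by
  have := h.isProbabilityMeasure
  have (p : ι × κ) : IsProbabilityMeasure (μ.map (Y p)) :=
    Measure.isProbabilityMeasure_map (hY p).aemeasurable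
  have hblock (i : ι) :
      μ.map (fun ω j => Y (i, j) ω) = Measure.infinitePi fun j => μ.map (Y (i, j)) :=
    (iIndepFun_iff_map_fun_eq_infinitePi_map fun j => hY (i, j)).1
      (h.precomp (Prod.mk_right_injective i))
  rw [iIndepFun_iff_map_fun_eq_infinitePi_map (fun i => by fun_prop)]
  calc μ.map (fun ω i j => Y (i, j) ω)
      = (μ.map fun ω p => Y p ω).map (MeasurableEquiv.curry ι κ β) :=
        (Measure.map_map (MeasurableEquiv.curry ι κ β).measurable
          (measurable_pi_iff.2 hY)).symm
    _ = Measure.infinitePi fun i => Measure.infinitePi fun j => μ.map (Y (i, j)) := by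
      rw [(iIndepFun_iff_map_fun_eq_infinitePi_map hY).1 h]
      exact Measure.infinitePi_map_curry fun i j => μ.map (Y (i, j))
    _ = _ := by simp_rw [hblock]

lemma iIndepFun_prodMk_of_indepFun {ι β : Type*} [MeasurableSpace β] {f g : ι → Ω → β}
    (hf : ∀ i, Measurable (f i)) (hg : ∀ i, Measurable (g i))
    (hf_indep : iIndepFun f μ) (hg_indep : iIndepFun g μ)
    (hfg : IndepFun (fun ω i => f i ω) (fun ω i => g i ω) μ) :
    iIndepFun (fun i ω => (f i ω, g i ω)) μ := by
  have := hf_indep.isProbabilityMeasure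
  have hmeas : ∀ k i, Measurable (![f, g] k i) := Fin.forall_fin_two.2 ⟨hf, hg⟩
  have hblocks := ((iIndepFun_uncurry' hmeas
    (iIndepFun_fin_two_of_indepFun (fun k => measurable_pi_iff.2 (hmeas k)) hfg)
    (Fin.forall_fin_two.2 ⟨hf_indep, hg_indep⟩)).precomp Prod.swap_injective).curry
    fun p => hmeas p.2 p.1
  exact hblocks.comp (fun _ t => (t 0, t 1)) fun _ => by fun_prop

lemma integrable_exp_neg_mul_of_nonneg [IsFiniteMeasure μ] {A : Ω → ℝ} (hA : Measurable A)
    (hA_nonneg : ∀ ω, 0 ≤ A ω) {θ : ℝ} (hθ : 0 ≤ θ) :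
    Integrable (fun ω => exp (-θ * A ω)) μ :=
  Integrable.of_bound (by fun_prop) 1 (ae_of_all _ fun ω => by
    rw [norm_of_nonneg (exp_nonneg _), exp_le_one_iff]
    nlinarith [hA_nonneg ω])

lemma lintegral_exp_mul_sub_eq {L A : Ω → ℝ} (hL : Measurable L) (hA : Measurable A)
    (h : IndepFun L A μ) {θ : ℝ} (hL_int : Integrable (fun ω => exp (θ * L ω)) μ)
    (hA_int : Integrable (fun ω => exp (-θ * A ω)) μ) :
    ∫⁻ ω, ENNReal.ofReal (exp (θ * (L ω - A ω))) ∂μ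
      = ENNReal.ofReal ((∫ ω, exp (θ * L ω) ∂μ) * ∫ ω, exp (-θ * A ω) ∂μ) := by
  have hφ : Measurable fun x => ENNReal.ofReal (exp (θ * x)) := by fun_prop
  have hψ : Measurable fun x => ENNReal.ofReal (exp (-θ * x)) := by fun_prop
  have hsplit : (fun ω => ENNReal.ofReal (exp (θ * (L ω - A ω))))
      = (fun ω => ENNReal.ofReal (exp (θ * L ω)))
        * fun ω => ENNReal.ofReal (exp (-θ * A ω)) := by
    ext ω
    rw [Pi.mul_apply, ← ENNReal.ofReal_mul (exp_nonneg _), ← exp_add]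
    ring_nf
  rw [hsplit, ENNReal.ofReal_mul (integral_nonneg fun _ => exp_nonneg _),
    ofReal_integral_eq_lintegral_ofReal hL_int (ae_of_all _ fun _ => exp_nonneg _),
    ofReal_integral_eq_lintegral_ofReal hA_int (ae_of_all _ fun _ => exp_nonneg _)]
  exact lintegral_mul_eq_lintegral_mul_lintegral_of_indepFun (hφ.comp hL) (hψ.comp hA)
    (h.comp hφ hψ)

end

theorem gigi1_waiting_bound_general
    {Ω : Type*} [MeasurableSpace Ω] (μ : Measure Ω) [IsProbabilityMeasure μ]
    (a L : ℕ → Ω → ℝ)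
    (hameas : ∀ ν, Measurable (a ν)) (hLmeas : ∀ ν, Measurable (L ν))
    (hanonneg : ∀ ν ω, 0 ≤ a ν ω)
    (haiid : iIndepFun a μ)
    (haid : ∀ ν, 1 ≤ ν → IdentDistrib (a ν) (a 1) μ μ)
    (hLiid : iIndepFun L μ)
    (hLid : ∀ ν, 1 ≤ ν → IdentDistrib (L ν) (L 1) μ μ)
    (hindep : IndepFun (fun ω (ν : ℕ) => a ν ω) (fun ω (ν : ℕ) => L ν ω) μ)
    (θ : ℝ) (hθ : 0 < θ)
    (hint : Integrable (fun ω => exp (θ * L 1 ω)) μ)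
    (hstab : (∫ ω, exp (θ * L 1 ω) ∂μ) * (∫ ω, exp (-θ * a 1 ω) ∂μ) ≤ 1) :
    ∀ n : ℕ, 1 ≤ n → ∀ τ : ℝ, 0 ≤ τ →
      μ {ω | τ < ⨆ m ∈ Finset.Icc 1 (n - 1),
          ((∑ ν ∈ Finset.Icc m (n - 1), L ν ω) - ∑ ν ∈ Finset.Icc m (n - 1), a ν ω)}
        ≤ ENNReal.ofReal (exp (-θ * τ)) := by
  intro n _ τ _
  set X : ℕ → Ω → ℝ := fun ν ω => L ν ω - a ν ω
  have hX_indep : iIndepFun X μ :=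
    (iIndepFun_prodMk_of_indepFun hameas hLmeas haiid hLiid hindep).comp
      (fun _ p => p.2 - p.1) fun _ => by fun_prop
  have hmgf (ν : ℕ) : ∫⁻ ω, ENNReal.ofReal (exp (θ * X (ν + 1) ω)) ∂μ ≤ 1 := by
    have hL :
        IdentDistrib (fun ω => exp (θ * L (ν + 1) ω)) (fun ω => exp (θ * L 1 ω)) μ μ :=
      (hLid _ (by omega)).comp (u := fun x => exp (θ * x)) (by fun_prop)
    have ha :
        IdentDistrib (fun ω => exp (-θ * a (ν + 1) ω)) (fun ω => exp (-θ * a 1 ω)) μ μ :=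
      (haid _ (by omega)).comp (u := fun x => exp (-θ * x)) (by fun_prop)
    rw [lintegral_exp_mul_sub_eq (hLmeas _) (hameas _)
      (hindep.symm.comp (measurable_pi_apply _) (measurable_pi_apply _)) (hL.integrable_iff.2 hint)
      (ha.integrable_iff.2 (integrable_exp_neg_mul_of_nonneg (hameas 1) (hanonneg 1) hθ.le)),
      hL.integral_eq, ha.integral_eq]
    exact ENNReal.ofReal_le_one.2 hstab
  calc _ ≤ μ {ω | τ < lindley (X · ω) (n - 1)} := measure_mono fun ω hω => by
        refine hω.trans_le ((le_of_eq ?_).trans (iSup_sum_Icc_le_lindley (X · ω) (n - 1)))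
        simp_rw [X, Finset.sum_sub_distrib]
    _ ≤ _ := measure_lt_lindley_le (fun ν => (hLmeas ν).sub (hameas ν)) hX_indep hθ.le hmgf
      (n - 1) τ

/-- **Kingman's waiting time bound for the GI|GI|1 queue.**
For i.i.d. inter-arrival times `a` and i.i.d. service times `L`, independent of each other,
and `θ > 0` with `E[exp (θ L 1)] · E[exp (-θ a 1)] ≤ 1`, the waiting time
`W n = [sup_{m ∈ [1,n-1]} (∑_{ν=m}^{n-1} L ν - ∑_{ν=m}^{n-1} a ν)]⁺` satisfies
`P[W n > τ] ≤ exp (-θ τ)`.  The `ℝ`-valued `⨆ m ∈ Finset.Icc 1 (n-1), …` is exactly the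
positive part `[·]⁺` of the finite supremum, since the empty supremum over `ℝ` is `0`. -/
theorem gigi1_waiting_bound
    {Ω : Type*} [MeasurableSpace Ω] (μ : Measure Ω) [IsProbabilityMeasure μ]
    (a L : ℕ → Ω → ℝ)
    (hameas : ∀ ν, Measurable (a ν)) (hLmeas : ∀ ν, Measurable (L ν))
    (hanonneg : ∀ ν ω, 0 ≤ a ν ω) (hLnonneg : ∀ ν ω, 0 ≤ L ν ω)
    (haiid : iIndepFun a μ)
    (haid : ∀ ν, 1 ≤ ν → IdentDistrib (a ν) (a 1) μ μ)
    (hLiid : iIndepFun L μ)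
    (hLid : ∀ ν, 1 ≤ ν → IdentDistrib (L ν) (L 1) μ μ)
    (hindep : IndepFun (fun ω (ν : ℕ) => a ν ω) (fun ω (ν : ℕ) => L ν ω) μ)
    (θ : ℝ) (hθ : 0 < θ)
    (hint : Integrable (fun ω => exp (θ * L 1 ω)) μ)
    (hstab : (∫ ω, exp (θ * L 1 ω) ∂μ) * (∫ ω, exp (-θ * a 1 ω) ∂μ) ≤ 1) :
    ∀ n : ℕ, 1 ≤ n → ∀ τ : ℝ, 0 ≤ τ →
      μ {ω | τ < ⨆ m ∈ Finset.Icc 1 (n - 1),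
          ((∑ ν ∈ Finset.Icc m (n - 1), L ν ω) - ∑ ν ∈ Finset.Icc m (n - 1), a ν ω)}
        ≤ ENNReal.ofReal (exp (-θ * τ)) :=
  gigi1_waiting_bound_general μ a L hameas hLmeas hanonneg haiid haid hLiid hLid hindep θ hθ hint
    hstab
end

section
/- Let T be a nonnegative random variable, θ > 0, and C ≥ 1 constants such that P[T > τ] ≤ C · exp(−θτ) for all τ ≥ 0. Then E[T] ≤ (ln C + 1)/θ. In particular, for the fork-join sojourn time satisfying P[T(n) > τ] ≤ k α exp(θ ρ_Q(θ)) exp(−θτ) with k α exp(θ ρ_Q(θ)) ≥ 1, the expected sojourn time satisfies E[T(n)] ≤ ρ_Q(θ) + (ln k + ln α + 1)/θ, i.e. the expected sojourn time grows at most logarithmically in the number of servers k. -/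
open MeasureTheory Real Set

/-!
By the layer-cake formula `E[T] = ∫₀^∞ P[T > τ] dτ`. Bounding the probability by `1` up to
`τ* = ln C / θ` and by the tail bound beyond it gives `E[T] ≤ τ* + C e^{-θ τ*} / θ = (ln C + 1) / θ`;
`τ*` is where the tail bound drops below the trivial bound `1`.
-/

theorem setLIntegral_ofReal_mul_exp_neg_mul_Ioi {θ : ℝ} (hθ : 0 < θ) {C : ℝ} (hC : 0 ≤ C)
    (s : ℝ) :
    ∫⁻ t in Ioi s, ENNReal.ofReal (C * exp (-θ * t)) = ENNReal.ofReal (C * exp (-θ * s) / θ) := by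
  have hθ' : -θ < 0 := neg_neg_of_pos hθ
  rw [← ofReal_integral_eq_lintegral_ofReal ((integrableOn_exp_mul_Ioi hθ' s).const_mul C)
    (Filter.Eventually.of_forall fun t => by positivity), integral_const_mul,
    integral_exp_mul_Ioi hθ' s, neg_div_neg_eq, mul_div_assoc]

theorem lintegral_ofReal_le_add_setLIntegral_meas_lt_Ioi {α : Type*} [MeasurableSpace α]
    (μ : Measure α) [IsProbabilityMeasure μ] {f : α → ℝ} (f_nn : 0 ≤ᵐ[μ] f)
    (f_mble : AEMeasurable f μ) {s : ℝ} (hs : 0 ≤ s) :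
    ∫⁻ ω, ENNReal.ofReal (f ω) ∂μ ≤ ENNReal.ofReal s + ∫⁻ t in Ioi s, μ {ω | t < f ω} := by
  rw [lintegral_eq_lintegral_meas_lt μ f_nn f_mble, ← Ioc_union_Ioi_eq_Ioi hs,
    lintegral_union measurableSet_Ioi (Ioc_disjoint_Ioi le_rfl)]
  gcongr
  calc ∫⁻ t in Ioc 0 s, μ {ω | t < f ω}
      ≤ ∫⁻ _ in Ioc 0 s, 1 := lintegral_mono fun _ => prob_le_one
    _ = ENNReal.ofReal s := by rw [setLIntegral_one, Real.volume_Ioc, sub_zero]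

theorem integral_le_of_meas_lt_le_exp {α : Type*} [MeasurableSpace α] (μ : Measure α)
    [IsProbabilityMeasure μ] {T : α → ℝ} (hT_nn : 0 ≤ᵐ[μ] T) (hT_mble : AEMeasurable T μ)
    {θ C s : ℝ} (hθ : 0 < θ) (hC : 0 ≤ C) (hs : 0 ≤ s)
    (htail : ∀ τ, s < τ → μ {ω | τ < T ω} ≤ ENNReal.ofReal (C * exp (-θ * τ))) :
    ∫ ω, T ω ∂μ ≤ s + C * exp (-θ * s) / θ := by
  rw [integral_eq_lintegral_of_nonneg_ae hT_nn hT_mble.aestronglyMeasurable]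
  refine ENNReal.toReal_le_of_le_ofReal (by positivity) ?_
  calc ∫⁻ ω, ENNReal.ofReal (T ω) ∂μ
      ≤ ENNReal.ofReal s + ∫⁻ t in Ioi s, μ {ω | t < T ω} :=
        lintegral_ofReal_le_add_setLIntegral_meas_lt_Ioi μ hT_nn hT_mble hs
    _ ≤ ENNReal.ofReal s + ∫⁻ t in Ioi s, ENNReal.ofReal (C * exp (-θ * t)) := by
        exact add_le_add_right (setLIntegral_mono (by fun_prop) htail) _
    _ = ENNReal.ofReal (s + C * exp (-θ * s) / θ) := by
        rw [setLIntegral_ofReal_mul_exp_neg_mul_Ioi hθ hC, ENNReal.ofReal_add hs (by positivity)]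

/-- **Expectation bound from an exponential tail bound.**
If a nonnegative random variable `T` satisfies `P[T > τ] ≤ C · exp (-θ τ)` for all `τ ≥ 0`,
with `C ≥ 1` and `θ > 0`, then `E[T] ≤ (ln C + 1)/θ`.  In particular, for the fork-join
sojourn time with `C = k · α · exp (θ ρQ) ≥ 1` one gets
`E[T] ≤ ρQ + (ln k + ln α + 1)/θ`, i.e. the expected sojourn time grows at most
logarithmically in the number of servers `k`. -/
theorem expectation_bound_from_exponential_tail
    {Ω : Type*} [MeasurableSpace Ω] (μ : Measure Ω) [IsProbabilityMeasure μ]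
    (T : Ω → ℝ) (hTmeas : Measurable T) (hTnonneg : ∀ ω, 0 ≤ T ω)
    (θ C : ℝ) (hθ : 0 < θ) (hC : 1 ≤ C)
    (htail : ∀ τ : ℝ, 0 ≤ τ → μ {ω | τ < T ω} ≤ ENNReal.ofReal (C * exp (-θ * τ))) :
    (∫ ω, T ω ∂μ) ≤ (Real.log C + 1) / θ ∧
      (∀ (k : ℕ) (α ρQ : ℝ), 1 ≤ k → 0 < α → C = (k : ℝ) * α * exp (θ * ρQ) →
        (∫ ω, T ω ∂μ) ≤ ρQ + (Real.log k + Real.log α + 1) / θ) := by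
  have hC₀ : 0 < C := one_pos.trans_le hC
  have hτ : 0 ≤ Real.log C / θ := div_nonneg (Real.log_nonneg hC) hθ.le
  have hbound : (∫ ω, T ω ∂μ) ≤ (Real.log C + 1) / θ := by
    have h := integral_le_of_meas_lt_le_exp μ (Filter.Eventually.of_forall hTnonneg)
      hTmeas.aemeasurable hθ hC₀.le hτ fun τ hτs => htail τ (hτ.trans hτs.le)
    have hexp : C * exp (-θ * (Real.log C / θ)) = 1 := by
      rw [show -θ * (Real.log C / θ) = -Real.log C by field_simp, exp_neg, exp_log hC₀,
        mul_inv_cancel₀ hC₀.ne']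
    rwa [hexp, ← add_div] at h
  refine ⟨hbound, fun k α ρQ hk hα hCeq => hbound.trans_eq ?_⟩
  have hk₀ : (0 : ℝ) < k := by exact_mod_cast hk
  rw [hCeq, Real.log_mul (by positivity) (exp_ne_zero _), Real.log_mul hk₀.ne' hα.ne', log_exp]
  field_simp
  ring
end

section
/- Let A : ℕ → ℝ be a nondecreasing sequence of arrival times with A(0) = 0, and Q_i(n) ≥ 0 for i ∈ [1,k], n ≥ 1, task service times. Define the split-merge dynamics: V(1) = A(1), V(n) = max{ A(n), V(n−1) + max_{i ∈ [1,k]} Q_i(n−1) } for n ≥ 2, and D(n) = V(n) + max_{i ∈ [1,k]} Q_i(n). Then for all n ≥ 1, D(n) = max_{m ∈ [1,n]} { A(m) + S(m,n) } with S(m,n) = Σ_{ν=m}^{n} max_{i ∈ [1,k]} Q_i(ν); that is, the split-merge system is an exact S(m,n) server. -/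
/-!
With `M ν = max_i Q i ν`, unfolding `V` in `D n = V n + M n` gives the max-plus recursion
`D (n+1) = max (A (n+1) + M (n+1)) (D n + M (n+1))`. The right-hand side
`max_{m ≤ n} (A m + ∑_{ν=m}^{n} M ν)` obeys the same recursion, since appending the index `n+1`
adds `M (n+1)` to every old candidate and contributes the new candidate `A (n+1) + M (n+1)`;
both start from `A 1 + M 1`.
-/

open Finset

namespace SplitMerge

variable {G : Type*} [AddCommGroup G] [LinearOrder G] [IsOrderedAddMonoid G]

theorem departure_succ (A M V D : ℕ → G)
    (hVrec : ∀ n, 2 ≤ n → V n = max (A n) (V (n - 1) + M (n - 1)))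
    (hD : ∀ n, D n = V n + M n) {n : ℕ} (hn : 1 ≤ n) :
    D (n + 1) = max (A (n + 1) + M (n + 1)) (D n + M (n + 1)) := by
  rw [hD, hVrec (n + 1) (by omega), Nat.add_sub_cancel, hD, max_add_add_right]

theorem maxPlus_succ (A M : ℕ → G) {n : ℕ} (hn : 1 ≤ n) :
    (Icc 1 (n + 1)).sup' (nonempty_Icc.mpr (by omega)) (fun m => A m + ∑ ν ∈ Icc m (n + 1), M ν)
      = max (A (n + 1) + M (n + 1))
          ((Icc 1 n).sup' (nonempty_Icc.mpr hn) (fun m => A m + ∑ ν ∈ Icc m n, M ν) + M (n + 1)) := by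
  have extend : ∀ m ∈ Icc 1 n,
      A m + ∑ ν ∈ Icc m (n + 1), M ν = (A m + ∑ ν ∈ Icc m n, M ν) + M (n + 1) := fun m hm => by
    rw [sum_Icc_succ_top (by simp at hm; omega), add_assoc]
  simp only [← insert_Icc_right_eq_Icc_add_one (show 1 ≤ n + 1 by omega)]
  rw [sup'_insert (nonempty_Icc.mpr hn), Icc_self, sum_singleton, sup'_add,
    sup'_congr (nonempty_Icc.mpr hn) rfl extend]

theorem departure_eq_maxPlus (A M V D : ℕ → G)
    (hV1 : V 1 = A 1)
    (hVrec : ∀ n, 2 ≤ n → V n = max (A n) (V (n - 1) + M (n - 1)))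
    (hD : ∀ n, D n = V n + M n) (n : ℕ) (hn : 1 ≤ n) :
    D n = (Icc 1 n).sup' (nonempty_Icc.mpr hn) (fun m => A m + ∑ ν ∈ Icc m n, M ν) := by
  induction n, hn using Nat.le_induction with
  | base => simp [hD, hV1]
  | succ n hn ih => rw [departure_succ A M V D hVrec hD hn, ih, maxPlus_succ A M hn]

end SplitMerge

theorem splitmerge_exact_maxplus_server_general
    (k : ℕ) (hk : 1 ≤ k)
    (A : ℕ → ℝ) (Q : ℕ → ℕ → ℝ) (V D : ℕ → ℝ)
    (hV1 : V 1 = A 1)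
    (hVrec : ∀ n, 2 ≤ n → V n = max (A n)
      (V (n - 1) + (Finset.Icc 1 k).sup' (Finset.nonempty_Icc.mpr hk) (fun i => Q i (n - 1))))
    (hD : ∀ n, D n = V n + (Finset.Icc 1 k).sup' (Finset.nonempty_Icc.mpr hk) (fun i => Q i n)) :
    ∀ n, ∀ hn : 1 ≤ n,
      D n = (Finset.Icc 1 n).sup' (Finset.nonempty_Icc.mpr hn)
        (fun m => A m + ∑ ν ∈ Finset.Icc m n,
          (Finset.Icc 1 k).sup' (Finset.nonempty_Icc.mpr hk) (fun i => Q i ν)) :=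
  SplitMerge.departure_eq_maxPlus A (fun ν => (Finset.Icc 1 k).sup' _ (fun i => Q i ν)) V D hV1 hVrec hD

/-- **A split-merge system is an exact max-plus server.**
All `k` tasks of a job start simultaneously at `V n`, where `V 1 = A 1` and
`V n = max (A n) (V (n-1) + max_{i ∈ [1,k]} Q i (n-1))` for `n ≥ 2`, and the job departs at
`D n = V n + max_{i ∈ [1,k]} Q i n`.  Then `D n = max_{m ∈ [1,n]} (A m + S m n)` with
`S(m,n) = ∑_{ν=m}^{n} max_{i ∈ [1,k]} Q i ν`. -/
theorem splitmerge_exact_maxplus_server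
    (k : ℕ) (hk : 1 ≤ k)
    (A : ℕ → ℝ) (Q : ℕ → ℕ → ℝ) (V D : ℕ → ℝ)
    (hA0 : A 0 = 0) (hAmono : Monotone A) (hQ : ∀ i n, 0 ≤ Q i n)
    (hV1 : V 1 = A 1)
    (hVrec : ∀ n, 2 ≤ n → V n = max (A n)
      (V (n - 1) + (Finset.Icc 1 k).sup' (Finset.nonempty_Icc.mpr hk) (fun i => Q i (n - 1))))
    (hD : ∀ n, D n = V n + (Finset.Icc 1 k).sup' (Finset.nonempty_Icc.mpr hk) (fun i => Q i n)) :
    ∀ n, ∀ hn : 1 ≤ n,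
      D n = (Finset.Icc 1 n).sup' (Finset.nonempty_Icc.mpr hn)
        (fun m => A m + ∑ ν ∈ Finset.Icc m n,
          (Finset.Icc 1 k).sup' (Finset.nonempty_Icc.mpr hk) (fun i => Q i ν)) :=
  splitmerge_exact_maxplus_server_general k hk A Q V D hV1 hVrec hD
end

section
/- Let A : ℕ → ℝ be a nondecreasing sequence of arrival times with A(0) = 0, and L_i(n) ≥ 0 for i ∈ [1,k], n ≥ 1, replica service times. Define the purging-replication dynamics: V(1) = A(1), V(n) = max{ A(n), V(n−1) + min_{i ∈ [1,k]} L_i(n−1) } for n ≥ 2, and D(n) = V(n) + min_{i ∈ [1,k]} L_i(n). Then for all n ≥ 1, D(n) = max_{m ∈ [1,n]} { A(m) + S(m,n) } with S(m,n) = Σ_{ν=m}^{n} min_{i ∈ [1,k]} L_i(ν); that is, the purging replication system is an exact S(m,n) server. -/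
/-! Adding the common purging time `min_i L_i(n)` to both arguments of the recursion for `V`
turns it into the max-plus Lindley recursion `D(n+1) = max (A(n+1), D(n)) + s(n+1)`; unrolling
it by induction on `n` gives the max-plus convolution of `A` with the partial sums of `s`. -/

open Finset

theorem Finset.sup'_Icc_add_one_right {α : Type*} [LinearOrder α] {a b : ℕ} (hab : a ≤ b)
    (f : ℕ → α) :
    (Icc a (b + 1)).sup' (nonempty_Icc.mpr (by omega)) f
      = max (f (b + 1)) ((Icc a b).sup' (nonempty_Icc.mpr hab) f) := by
  simp_rw [← insert_Icc_right_eq_Icc_add_one (by omega : a ≤ b + 1)]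
  exact sup'_insert ..

theorem eq_sup'_add_sum_Icc_of_lindley {G : Type*} [AddCommGroup G] [LinearOrder G]
    [IsOrderedAddMonoid G] (a s D : ℕ → G) (h₁ : D 1 = a 1 + s 1)
    (hrec : ∀ n, 1 ≤ n → D (n + 1) = max (a (n + 1)) (D n) + s (n + 1)) :
    ∀ n (hn : 1 ≤ n), D n = (Icc 1 n).sup' (nonempty_Icc.mpr hn)
      fun m => a m + ∑ ν ∈ Icc m n, s ν := by
  intro n hn
  induction n, hn using Nat.le_induction with
  | base => simp [h₁]
  | succ n hn ih =>
    have hshift : (Icc 1 n).sup' (nonempty_Icc.mpr hn) (fun m => a m + ∑ ν ∈ Icc m n, s ν)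
          + s (n + 1)
        = (Icc 1 n).sup' (nonempty_Icc.mpr hn) fun m => a m + ∑ ν ∈ Icc m (n + 1), s ν := by
      rw [sup'_add]
      refine sup'_congr _ rfl fun m hm => ?_
      rw [sum_Icc_succ_top (by grind), add_assoc]
    rw [sup'_Icc_add_one_right hn, Icc_self, sum_singleton, ← hshift, ← ih, max_add_add_right,
      hrec n hn]

theorem replication_exact_maxplus_server_general
    (k : ℕ) (hk : 1 ≤ k)
    (A : ℕ → ℝ) (L : ℕ → ℕ → ℝ) (V D : ℕ → ℝ)
    (hV1 : V 1 = A 1)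
    (hVrec : ∀ n, 2 ≤ n → V n = max (A n)
      (V (n - 1) + (Finset.Icc 1 k).inf' (Finset.nonempty_Icc.mpr hk) (fun i => L i (n - 1))))
    (hD : ∀ n, D n = V n + (Finset.Icc 1 k).inf' (Finset.nonempty_Icc.mpr hk) (fun i => L i n)) :
    ∀ n, ∀ hn : 1 ≤ n,
      D n = (Finset.Icc 1 n).sup' (Finset.nonempty_Icc.mpr hn)
        (fun m => A m + ∑ ν ∈ Finset.Icc m n,
          (Finset.Icc 1 k).inf' (Finset.nonempty_Icc.mpr hk) (fun i => L i ν)) := by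
  refine eq_sup'_add_sum_Icc_of_lindley A _ D (by rw [hD, hV1]) fun n hn => ?_
  rw [hD, hVrec (n + 1) (by omega), Nat.add_sub_cancel, ← hD]

/-- **A replication system with purging is an exact max-plus server.**
All `k` replicas of a job start simultaneously at `V n`, where `V 1 = A 1` and
`V n = max (A n) (V (n-1) + min_{i ∈ [1,k]} L i (n-1))` for `n ≥ 2`, and the job departs at
`D n = V n + min_{i ∈ [1,k]} L i n`.  Then `D n = max_{m ∈ [1,n]} (A m + S m n)` with
`S(m,n) = ∑_{ν=m}^{n} min_{i ∈ [1,k]} L i ν`. -/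
theorem replication_exact_maxplus_server
    (k : ℕ) (hk : 1 ≤ k)
    (A : ℕ → ℝ) (L : ℕ → ℕ → ℝ) (V D : ℕ → ℝ)
    (hA0 : A 0 = 0) (hAmono : Monotone A) (hL : ∀ i n, 0 ≤ L i n)
    (hV1 : V 1 = A 1)
    (hVrec : ∀ n, 2 ≤ n → V n = max (A n)
      (V (n - 1) + (Finset.Icc 1 k).inf' (Finset.nonempty_Icc.mpr hk) (fun i => L i (n - 1))))
    (hD : ∀ n, D n = V n + (Finset.Icc 1 k).inf' (Finset.nonempty_Icc.mpr hk) (fun i => L i n)) :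
    ∀ n, ∀ hn : 1 ≤ n,
      D n = (Finset.Icc 1 n).sup' (Finset.nonempty_Icc.mpr hn)
        (fun m => A m + ∑ ν ∈ Finset.Icc m n,
          (Finset.Icc 1 k).inf' (Finset.nonempty_Icc.mpr hk) (fun i => L i ν)) :=
  replication_exact_maxplus_server_general k hk A L V D hV1 hVrec hD
end

section
/- Consider h exact max-plus servers in tandem: let A : ℕ → ℝ be nondecreasing arrival times with A(0) = 0, let S^j(m,n) ≥ 0 for j ∈ [1,h] and n ≥ m ≥ 1 be the stage service processes, and define recursively D^0(n) = A(n) and D^j(n) = max_{m ∈ [1,n]} { D^{j−1}(m) + S^j(m,n) } for j ∈ [1,h]. Then for all n ≥ 1, D^h(n) = max_{m ∈ [1,n]} { A(m) + S^net(m,n) }, where S^net(m,n) = max over all index sequences m ≤ ν^1 ≤ ν^2 ≤ … ≤ ν^{h−1} ≤ n of { S^1(m,ν^1) + S^2(ν^1,ν^2) + … + S^h(ν^{h−1},n) }; that is, the tandem network is an exact S^net(m,n) server. -/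
/-!
Unfolding the recursion one stage at a time: a monotone index path ending at `n` after `j + 1`
stages is a path ending at some `m ∈ [1, n]` after `j` stages, extended by the last hop
`m ↦ n`. Hence the path values for `j + 1` stages are the union over `m ∈ [1, n]` of the
path values for `j` stages shifted by `S (j + 1) m n`, and a finite maximum of maxima is the
maximum of the union.
-/

theorem Finset.isGreatest_biUnion_sup' {ι α : Type*} [LinearOrder α] {s : Finset ι}
    (hs : s.Nonempty) {P : ι → Set α} {f : ι → α} (hP : ∀ i ∈ s, IsGreatest (P i) (f i)) :
    IsGreatest (⋃ i ∈ s, P i) (s.sup' hs f) := by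
  constructor
  · obtain ⟨i, hi, hsup⟩ := s.exists_mem_eq_sup' hs f
    exact Set.mem_biUnion hi (hsup ▸ (hP i hi).1)
  · simp only [mem_upperBounds, Set.mem_iUnion]
    rintro x ⟨i, hi, hx⟩
    exact ((hP i hi).2 hx).trans (s.le_sup' f hi)

theorem Fin.monotone_snoc {α : Type*} [Preorder α] {n : ℕ} {ν : Fin (n + 1) → α} {a : α}
    (hν : Monotone ν) (ha : ν (Fin.last n) ≤ a) : Monotone (Fin.snoc ν a : Fin (n + 2) → α) := by
  rw [Fin.monotone_iff_le_succ]
  refine Fin.lastCases ?_ (fun i => ?_)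
  · simpa only [Fin.succ_last, Fin.snoc_last, Fin.snoc_castSucc] using ha
  · simpa only [Fin.succ_castSucc, Fin.snoc_castSucc] using hν (Fin.castSucc_le_succ i)

namespace Tandem

variable (A : ℕ → ℝ) (S : ℕ → ℕ → ℕ → ℝ)

def pathValue {j : ℕ} (ν : Fin (j + 1) → ℕ) : ℝ :=
  A (ν 0) + ∑ k : Fin j, S ((k : ℕ) + 1) (ν k.castSucc) (ν k.succ)

def pathValues (j n : ℕ) : Set ℝ :=
  {x | ∃ ν : Fin (j + 1) → ℕ, Monotone ν ∧ 1 ≤ ν 0 ∧ ν (Fin.last j) = n ∧ x = pathValue A S ν}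

theorem pathValue_snoc {j : ℕ} (ν : Fin (j + 1) → ℕ) (n : ℕ) :
    pathValue A S (Fin.snoc ν n : Fin (j + 2) → ℕ) = pathValue A S ν + S (j + 1) (ν (Fin.last j)) n := by
  simp only [pathValue, Fin.sum_univ_castSucc (n := j), Fin.succ_castSucc, Fin.snoc_castSucc,
    Fin.succ_last, Fin.snoc_last, Fin.val_castSucc, Fin.val_last]
  rw [← Fin.castSucc_zero, Fin.snoc_castSucc]
  ring

theorem pathValues_zero (n : ℕ) (hn : 1 ≤ n) : pathValues A S 0 n = {A n} := by
  ext x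
  constructor
  · rintro ⟨ν, -, -, hlast, rfl⟩
    simp [pathValue, ← hlast, Fin.last]
  · rintro rfl
    exact ⟨fun _ => n, monotone_const, hn, rfl, by simp [pathValue]⟩

theorem pathValues_succ (j n : ℕ) :
    pathValues A S (j + 1) n =
      ⋃ m ∈ Finset.Icc 1 n, (· + S (j + 1) m n) '' pathValues A S j m := by
  ext x
  simp only [Set.mem_iUnion, Set.mem_image, Finset.mem_Icc]
  constructor
  · rintro ⟨ν, hν, h1, rfl, rfl⟩
    refine ⟨ν (Fin.last j).castSucc, ⟨h1.trans (hν (Fin.zero_le _)), hν (Fin.le_last _)⟩,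
      pathValue A S (Fin.init ν), ⟨Fin.init ν, ?_, h1, rfl, rfl⟩, ?_⟩
    · exact hν.comp Fin.strictMono_castSucc.monotone
    · conv_rhs => rw [← Fin.snoc_init_self ν, pathValue_snoc]
      rfl
  · rintro ⟨m, ⟨-, hmn⟩, y, ⟨ν, hν, h1, hlast, rfl⟩, rfl⟩
    refine ⟨Fin.snoc ν n, Fin.monotone_snoc hν (hlast ▸ hmn), ?_, Fin.snoc_last _ _, ?_⟩
    · rwa [← Fin.castSucc_zero, Fin.snoc_castSucc]
    · rw [pathValue_snoc, hlast]

theorem isGreatest_pathValues (h : ℕ) (D : ℕ → ℕ → ℝ) (hD0 : ∀ n, D 0 n = A n)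
    (hDrec : ∀ j, 1 ≤ j → j ≤ h → ∀ n, ∀ hn : 1 ≤ n,
      D j n = (Finset.Icc 1 n).sup' (Finset.nonempty_Icc.mpr hn)
        (fun m => D (j - 1) m + S j m n)) :
    ∀ j ≤ h, ∀ n, 1 ≤ n → IsGreatest (pathValues A S j n) (D j n) := by
  intro j
  induction j with
  | zero =>
    intro _ n hn
    rw [pathValues_zero A S n hn, hD0]
    exact isGreatest_singleton
  | succ j ih =>
    intro hj n hn
    rw [pathValues_succ, hDrec (j + 1) j.succ_pos hj n hn]
    refine Finset.isGreatest_biUnion_sup' _ fun m hm => ?_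
    exact (strictMono_id.add_const _).map_isGreatest.mpr
      (ih (by omega) m (Finset.mem_Icc.mp hm).1)

end Tandem

theorem tandem_exact_maxplus_server_general
    (h : ℕ) (A : ℕ → ℝ) (S : ℕ → ℕ → ℕ → ℝ) (D : ℕ → ℕ → ℝ)
    (hD0 : ∀ n, D 0 n = A n)
    (hDrec : ∀ j, 1 ≤ j → j ≤ h → ∀ n, ∀ hn : 1 ≤ n,
      D j n = (Finset.Icc 1 n).sup' (Finset.nonempty_Icc.mpr hn)
        (fun m => D (j - 1) m + S j m n)) :
    ∀ n, 1 ≤ n →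
      IsGreatest
        {x : ℝ | ∃ ν : Fin (h + 1) → ℕ, Monotone ν ∧ 1 ≤ ν 0 ∧ ν (Fin.last h) = n ∧
          x = A (ν 0) + ∑ j : Fin h, S ((j : ℕ) + 1) (ν j.castSucc) (ν j.succ)}
        (D h n) :=
  Tandem.isGreatest_pathValues A S h D hD0 hDrec h le_rfl

/-- **A tandem of exact max-plus servers is an exact max-plus server** with the max-plus
convolution of the stage service processes:  with `D 0 n = A n` and
`D j n = max_{m ∈ [1,n]} (D (j-1) m + S j m n)` for `j ∈ [1,h]`, the end-to-end departure
`D h n` is the greatest value of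
`A (ν 0) + ∑_{j=1}^{h} S j (ν (j-1)) (ν j)` over all monotone index sequences
`ν : Fin (h+1) → ℕ` with `1 ≤ ν 0` and `ν h = n`;  that is, the tandem network is an exact
`S^net(m,n) = max_{m ≤ ν¹ ≤ ⋯ ≤ ν^{h-1} ≤ n} (S¹(m,ν¹) + ⋯ + S^h(ν^{h-1},n))` server. -/
theorem tandem_exact_maxplus_server
    (h : ℕ) (A : ℕ → ℝ) (S : ℕ → ℕ → ℕ → ℝ) (D : ℕ → ℕ → ℝ)
    (hA0 : A 0 = 0) (hAmono : Monotone A)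
    (hS : ∀ j m n, 1 ≤ j → j ≤ h → 1 ≤ m → m ≤ n → 0 ≤ S j m n)
    (hD0 : ∀ n, D 0 n = A n)
    (hDrec : ∀ j, 1 ≤ j → j ≤ h → ∀ n, ∀ hn : 1 ≤ n,
      D j n = (Finset.Icc 1 n).sup' (Finset.nonempty_Icc.mpr hn)
        (fun m => D (j - 1) m + S j m n)) :
    ∀ n, 1 ≤ n →
      IsGreatest
        {x : ℝ | ∃ ν : Fin (h + 1) → ℕ, Monotone ν ∧ 1 ≤ ν 0 ∧ ν (Fin.last h) = n ∧
          x = A (ν 0) + ∑ j : Fin h, S ((j : ℕ) + 1) (ν j.castSucc) (ν j.succ)}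
        (D h n) :=
  tandem_exact_maxplus_server_general h A S D hD0 hDrec
end

section
/- Consider a single-queue multi-server system with k servers, GI arrivals and exponential service: let (a(ν))_{ν ≥ 1} be i.i.d. nonnegative inter-arrival times with A(m,n) = Σ_{ν=m}^{n−1} a(ν); let (Z(ν))_{ν ≥ 1} be i.i.d. exponential random variables with rate kμ, independent of the arrivals, and define the waiting time bound process W(n) = max_{m ∈ [1,n]} { Σ_{ν=m}^{n−1} Z(ν) − A(m,n) } (the term m = n is 0, so W(n) ≥ 0); let L(n) be exponential with rate μ, independent of W(n), and T(n) = W(n) + L(n). Fix θ with 0 < θ < kμ, θ ≠ μ, such that E[exp(θ Z(1))] · E[exp(−θ a(1))] ≤ 1, i.e. (kμ/(kμ−θ)) · E[exp(−θ a(1))] ≤ 1. Then for all n ≥ 1 and τ ≥ 0: P[W(n) > τ] ≤ exp(−θτ), and P[T(n) > τ] ≤ (μ/(μ−θ)) · (exp(−θτ) − exp(−μτ)) + exp(−μτ). -/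
open MeasureTheory ProbabilityTheory Real

/-- Waiting time process of the single-queue multi-server system:
`W n = max_{m ∈ [1,n]} (∑_{ν=m}^{n-1} Z ν - ∑_{ν=m}^{n-1} a ν)`; the term `m = n` is `0`,
so `W n ≥ 0` and the real-valued `⨆` (empty supremum `0`) realizes this maximum. -/
noncomputable def sqWait {Ω : Type*} (Z a : ℕ → Ω → ℝ) (n : ℕ) (ω : Ω) : ℝ :=
  ⨆ m ∈ Finset.Icc 1 n,
    ((∑ ν ∈ Finset.Icc m (n - 1), Z ν ω) - ∑ ν ∈ Finset.Icc m (n - 1), a ν ω)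

open scoped ENNReal

/-!
The waiting times obey Lindley's recursion `W (n + 1) = max (W n + (Z n - a n)) 0`, `W 1 = 0`,
and the increment `Z n - a n` is independent of `W n`, which only involves indices below `n`.
The stability condition says exactly that `E[exp (θ (Z n - a n))] ≤ 1`, so integrating the
tail bound `P[W n > s] ≤ exp (-θ s)` (trivial for `s ≤ 0`) against the law of the increment
propagates it along the recursion. For the sojourn time, `P[T n > τ]` is the integral of
`min 1 (exp (-θ (τ - x)))` against the exponential law of `L n`; splitting at `x = τ` gives the
two terms of the bound.
-/

section Lindley

variable {Ω : Type*} (Z a : ℕ → Ω → ℝ)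

lemma sqWait_zero : sqWait Z a 0 = 0 := by
  ext ω
  simp [sqWait]

lemma sqWait_eq_sup' {n : ℕ} (hn : 1 ≤ n) (ω : Ω) :
    sqWait Z a n ω = (Finset.Icc 1 n).sup' (Finset.nonempty_Icc.2 hn)
      (fun m ↦ (∑ ν ∈ Finset.Icc m (n - 1), Z ν ω) - ∑ ν ∈ Finset.Icc m (n - 1), a ν ω) := by
  have hlast : n ∈ Finset.Icc 1 n := Finset.mem_Icc.2 ⟨hn, le_rfl⟩
  have hzero :
      sSup ∅ ≤ (∑ ν ∈ Finset.Icc n (n - 1), Z ν ω) - ∑ ν ∈ Finset.Icc n (n - 1), a ν ω := by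
    simp [Finset.Icc_eq_empty_of_lt (Nat.sub_lt hn one_pos)]
  rw [sqWait, Finset.ciSup_eq_max'_image _ ⟨n, hlast, hzero⟩
    (Finset.image_nonempty.2 ⟨n, hlast⟩), Finset.max'_eq_sup',
    Finset.sup'_image]
  rfl

lemma sqWait_one : sqWait Z a 1 = 0 := by
  ext ω
  simp [sqWait_eq_sup' Z a le_rfl]

lemma sqWait_succ {n : ℕ} (hn : 1 ≤ n) (ω : Ω) :
    sqWait Z a (n + 1) ω = max (sqWait Z a n ω + (Z n ω - a n ω)) 0 := by
  obtain ⟨p, rfl⟩ : ∃ p, n = p + 1 := ⟨n - 1, by omega⟩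
  have hne : (Finset.Icc 1 (p + 1)).Nonempty := Finset.nonempty_Icc.2 hn
  have hshift : ∀ m ∈ Finset.Icc 1 (p + 1),
      (∑ ν ∈ Finset.Icc m (p + 1), Z ν ω) - ∑ ν ∈ Finset.Icc m (p + 1), a ν ω
        = (∑ ν ∈ Finset.Icc m p, Z ν ω) - (∑ ν ∈ Finset.Icc m p, a ν ω)
          + (Z (p + 1) ω - a (p + 1) ω) := by
    intro m hm
    rw [Finset.sum_Icc_succ_top (Finset.mem_Icc.1 hm).2,
      Finset.sum_Icc_succ_top (Finset.mem_Icc.1 hm).2]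
    ring
  rw [sqWait_eq_sup' Z a (by omega), sqWait_eq_sup' Z a hn,
    Finset.sup'_congr _ (Finset.insert_Icc_right_eq_Icc_add_one (by omega)).symm fun _ _ ↦ rfl,
    Finset.sup'_insert (H := hne), Nat.add_sub_cancel, Nat.add_sub_cancel,
    Finset.Icc_eq_empty (by omega : ¬p + 1 + 1 ≤ p + 1), Finset.sum_empty, Finset.sum_empty,
    sub_self, Finset.sup'_congr hne rfl hshift, ← Finset.sup'_add, sup_comm, max_comm]

lemma measurable_sqWait {m : MeasurableSpace Ω} {n : ℕ}
    (hZ : ∀ ν < n, Measurable[m] (Z ν)) (ha : ∀ ν < n, Measurable[m] (a ν)) :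
    Measurable[m] (sqWait Z a n) := by
  induction n with
  | zero => exact sqWait_zero Z a ▸ measurable_const
  | succ n ih =>
    rcases Nat.eq_zero_or_pos n with rfl | hn
    · exact sqWait_one Z a ▸ measurable_const
    · rw [funext (sqWait_succ Z a hn)]
      exact ((ih (fun ν hν ↦ hZ ν (by omega)) fun ν hν ↦ ha ν (by omega)).add
        ((hZ n n.lt_succ_self).sub (ha n n.lt_succ_self))).max measurable_const

end Lindley

lemma lintegral_expMeasure {r : ℝ} {f : ℝ → ℝ≥0∞} (hf : Measurable f) :
    ∫⁻ x, f x ∂expMeasure r = ∫⁻ x in Set.Ici 0, ENNReal.ofReal (r * exp (-r * x)) * f x := by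
  rw [show expMeasure r = volume.withDensity (exponentialPDF r) from rfl,
    lintegral_withDensity_eq_lintegral_mul _
      (show Measurable (exponentialPDF r) from (measurable_exponentialPDFReal r).ennreal_ofReal) hf,
    ← lintegral_indicator measurableSet_Ici]
  refine lintegral_congr fun x ↦ ?_
  rcases lt_or_ge x 0 with hx | hx
  · simp [exponentialPDF_of_neg hx, hx.not_ge]
  · simp [exponentialPDF_of_nonneg hx, hx]

lemma lintegral_exp_mul_expMeasure {r θ : ℝ} (hr : 0 ≤ r) (hθr : θ < r) :
    ∫⁻ z, ENNReal.ofReal (exp (θ * z)) ∂expMeasure r = ENNReal.ofReal (r / (r - θ)) := by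
  have hint : IntegrableOn (fun z ↦ r * exp (-(r - θ) * z)) (Set.Ici 0) :=
    Iff.mpr integrableOn_Ici_iff_integrableOn_Ioi
      ((exp_neg_integrableOn_Ioi 0 (sub_pos.2 hθr)).const_mul r)
  rw [lintegral_expMeasure (by fun_prop)]
  calc ∫⁻ z in Set.Ici 0, ENNReal.ofReal (r * exp (-r * z)) * ENNReal.ofReal (exp (θ * z))
      = ∫⁻ z in Set.Ici 0, ENNReal.ofReal (r * exp (-(r - θ) * z)) := by
        refine lintegral_congr fun z ↦ ?_
        rw [← ENNReal.ofReal_mul' (exp_nonneg _), mul_assoc, ← exp_add]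
        congr 3
        ring
    _ = ENNReal.ofReal (r / (r - θ)) := by
        rw [← ofReal_integral_eq_lintegral_ofReal hint (.of_forall fun z ↦ by positivity),
          integral_Ici_eq_integral_Ioi, integral_const_mul,
          integral_exp_mul_Ioi (neg_lt_zero.2 (sub_pos.2 hθr)),
          mul_zero, exp_zero, neg_div_neg_eq, mul_one_div]

lemma integral_exp_convolution {r θ τ : ℝ} (hθr : θ ≠ r) (hτ : 0 ≤ τ) :
    ∫ x in Set.Icc 0 τ, r * exp (-r * x) * exp (-θ * (τ - x))
      = r / (r - θ) * (exp (-θ * τ) - exp (-r * τ)) := by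
  have hc : θ - r ≠ 0 := sub_ne_zero.2 hθr
  have hfun : (fun x ↦ r * exp (-r * x) * exp (-θ * (τ - x)))
      = fun x ↦ r * exp (-θ * τ) * exp ((θ - r) * x) := by
    funext x
    rw [mul_assoc, mul_assoc, ← exp_add, ← exp_add]
    ring_nf
  have hprod : exp (-θ * τ) * exp ((θ - r) * τ) = exp (-r * τ) := by
    rw [← exp_add]
    ring_nf
  rw [hfun, integral_Icc_eq_integral_Ioc, ← intervalIntegral.integral_of_le hτ,
    intervalIntegral.integral_const_mul,
    intervalIntegral.integral_comp_mul_left (fun x ↦ exp x) hc, integral_exp, smul_eq_mul,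
    mul_zero, exp_zero, ← hprod]
  field_simp
  ring

lemma lintegral_min_one_exp_expMeasure_le {r θ τ : ℝ} (hr : 0 < r) (hθr : θ ≠ r) (hτ : 0 ≤ τ) :
    ∫⁻ x, min 1 (ENNReal.ofReal (exp (-θ * (τ - x)))) ∂expMeasure r
      ≤ ENNReal.ofReal (r / (r - θ) * (exp (-θ * τ) - exp (-r * τ)) + exp (-r * τ)) := by
  have hconv : IntegrableOn (fun x ↦ r * exp (-r * x) * exp (-θ * (τ - x))) (Set.Icc 0 τ) :=
    (by fun_prop : Continuous fun x ↦ r * exp (-r * x) * exp (-θ * (τ - x))).integrableOn_Icc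
  have hconv_nonneg : 0 ≤ ∫ x in Set.Icc 0 τ, r * exp (-r * x) * exp (-θ * (τ - x)) :=
    setIntegral_nonneg measurableSet_Icc fun x _ ↦ by positivity
  rw [lintegral_expMeasure (by fun_prop), ← Set.Icc_union_Ioi_eq_Ici hτ,
    lintegral_union measurableSet_Ioi
      ((Set.Iic_disjoint_Ioi le_rfl).mono_left Set.Icc_subset_Iic_self)]
  calc _ ≤ (∫⁻ x in Set.Icc 0 τ, ENNReal.ofReal (r * exp (-r * x) * exp (-θ * (τ - x))))
        + ∫⁻ x in Set.Ioi τ, ENNReal.ofReal (r * exp (-r * x)) := by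
        gcongr with x x
        · rw [ENNReal.ofReal_mul (by positivity : 0 ≤ r * exp (-r * x))]
          exact mul_le_mul_right (min_le_right _ _) _
        · exact mul_le_of_le_one_right' (min_le_left _ _)
    _ = ENNReal.ofReal (r / (r - θ) * (exp (-θ * τ) - exp (-r * τ)) + exp (-r * τ)) := by
        rw [← ofReal_integral_eq_lintegral_ofReal hconv (.of_forall fun x ↦ by positivity),
          ← ofReal_integral_eq_lintegral_ofReal ((exp_neg_integrableOn_Ioi τ hr).const_mul r)
            (.of_forall fun x ↦ by positivity),
          ← ENNReal.ofReal_add hconv_nonneg (by positivity), integral_exp_convolution hθr hτ,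
          integral_const_mul, integral_exp_mul_Ioi (neg_lt_zero.2 hr)]
        field_simp

section Independence

variable {Ω : Type*} [MeasurableSpace Ω] {P : Measure Ω}

lemma iIndepFun_fin_two [IsProbabilityMeasure P] {β : Type*} [MeasurableSpace β] {X Y : Ω → β}
    (hX : Measurable X) (hY : Measurable Y) (h : IndepFun X Y P) :
    iIndepFun ![X, Y] P := by
  have hXY : ∀ i, Measurable (![X, Y] i) := Fin.forall_fin_two.2 ⟨hX, hY⟩
  rw [iIndepFun_iff_map_fun_eq_pi_map fun i ↦ (hXY i).aemeasurable]
  refine (MeasurableEquiv.piFinTwo fun _ ↦ β).map_measurableEquiv_injective ?_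
  rw [(measurePreserving_piFinTwo _).map_eq, Measure.map_map (by fun_prop)
    (measurable_pi_iff.2 hXY)]
  exact (indepFun_iff_map_prod_eq_prod_map_map hX.aemeasurable hY.aemeasurable).1 h

lemma iIndepFun_fin_two_prod [IsProbabilityMeasure P] {κ β : Type*} [MeasurableSpace β]
    {X Y : κ → Ω → β}
    (hX : ∀ j, Measurable (X j)) (hY : ∀ j, Measurable (Y j))
    (hXY : IndepFun (fun ω j ↦ X j ω) (fun ω j ↦ Y j ω) P)
    (hXi : iIndepFun X P) (hYi : iIndepFun Y P) :
    iIndepFun (fun p : Fin 2 × κ ↦ ![X, Y] p.1 p.2) P := by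
  have hmeas : ∀ i j, Measurable (![X, Y] i j) := Fin.forall_fin_two.2 ⟨hX, hY⟩
  refine iIndepFun_uncurry' hmeas ?_ (Fin.forall_fin_two.2 ⟨hXi, hYi⟩)
  convert iIndepFun_fin_two (measurable_pi_lambda _ hX) (measurable_pi_lambda _ hY) hXY using 1
  ext i : 1
  fin_cases i <;> rfl

lemma indepFun_sub_sqWait {Z a : ℕ → Ω → ℝ} (hZ : ∀ ν, Measurable (Z ν))
    (ha : ∀ ν, Measurable (a ν)) (h : iIndepFun (fun p : Fin 2 × ℕ ↦ ![Z, a] p.1 p.2) P)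
    (n : ℕ) : IndepFun (fun ω ↦ Z n ω - a n ω) (sqWait Z a n) P := by
  have hmeas : ∀ i j, Measurable (![Z, a] i j) := Fin.forall_fin_two.2 ⟨hZ, ha⟩
  let σ : Fin 2 × ℕ → MeasurableSpace Ω := fun p ↦ .comap (![Z, a] p.1 p.2) inferInstance
  have hσ : ∀ p, σ p ≤ ‹MeasurableSpace Ω› := fun p ↦ (hmeas p.1 p.2).comap_le
  have hsplit := indep_iSup_of_disjoint hσ h (S := {p | p.2 = n}) (T := {p | p.2 < n})
    (Set.disjoint_left.2 fun p hS hT ↦ (Nat.lt_irrefl n) (hS ▸ hT))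
  have hmem : ∀ S : Set (Fin 2 × ℕ), ∀ p ∈ S, Measurable[⨆ q ∈ S, σ q] (![Z, a] p.1 p.2) :=
    fun S p hp ↦ (comap_measurable _).mono (le_iSup₂ (f := fun q (_ : q ∈ S) ↦ σ q) p hp) le_rfl
  refine indep_of_indep_of_le_left (indep_of_indep_of_le_right hsplit ?_) ?_
  · exact (measurable_sqWait Z a (fun ν hν ↦ hmem _ (0, ν) hν) fun ν hν ↦ hmem _ (1, ν) hν).comap_le
  · exact ((hmem {p | p.2 = n} (0, n) rfl).sub (hmem {p | p.2 = n} (1, n) rfl)).comap_le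

end Independence

section Tails

variable {Ω : Type*} [MeasurableSpace Ω] {P : Measure Ω} [IsProbabilityMeasure P]

lemma measure_lt_add_eq_lintegral {V X : Ω → ℝ} (hV : Measurable V) (hX : Measurable X)
    (h : IndepFun X V P) (τ : ℝ) :
    P {ω | τ < V ω + X ω} = ∫⁻ x, P {ω | τ - x < V ω} ∂(P.map X) := by
  have hs : MeasurableSet {p : ℝ × ℝ | τ - p.1 < p.2} :=
    measurableSet_lt (measurable_const.sub measurable_fst) measurable_snd
  have hset : {ω | τ < V ω + X ω} = (fun ω ↦ (X ω, V ω)) ⁻¹' {p | τ - p.1 < p.2} := by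
    ext ω
    simp [sub_lt_iff_lt_add]
  rw [hset, ← Measure.map_apply (hX.prodMk hV) hs,
    (indepFun_iff_map_prod_eq_prod_map_map hX.aemeasurable hV.aemeasurable).1 h,
    Measure.prod_apply hs]
  refine lintegral_congr fun x ↦ ?_
  exact Measure.map_apply hV (measurableSet_Ioi (a := τ - x))

lemma measure_le_ofReal_exp_of_nonpos {θ s : ℝ} (hθ : 0 ≤ θ) (hs : s ≤ 0) (A : Set Ω) :
    P A ≤ ENNReal.ofReal (exp (-θ * s)) :=
  prob_le_one.trans (ENNReal.one_le_ofReal.2 (one_le_exp (by nlinarith)))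

lemma measure_lt_max_add_le {V X : Ω → ℝ} (hV : Measurable V) (hX : Measurable X)
    (h : IndepFun X V P) {θ : ℝ} (hθ : 0 ≤ θ)
    (hVtail : ∀ s, P {ω | s < V ω} ≤ ENNReal.ofReal (exp (-θ * s)))
    (hmgf : ∫⁻ ω, ENNReal.ofReal (exp (θ * X ω)) ∂P ≤ 1) (s : ℝ) :
    P {ω | s < max (V ω + X ω) 0} ≤ ENNReal.ofReal (exp (-θ * s)) := by
  rcases lt_or_ge s 0 with hs | hs
  · exact measure_le_ofReal_exp_of_nonpos hθ hs.le _
  have hset : {ω | s < max (V ω + X ω) 0} = {ω | s < V ω + X ω} := by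
    ext ω
    simp [hs.not_gt]
  have hexp : Measurable fun x ↦ ENNReal.ofReal (exp (θ * x)) := by fun_prop
  rw [hset, measure_lt_add_eq_lintegral hV hX h]
  calc ∫⁻ x, P {ω | s - x < V ω} ∂(P.map X)
      ≤ ∫⁻ x, ENNReal.ofReal (exp (-θ * s)) * ENNReal.ofReal (exp (θ * x)) ∂(P.map X) := by
        refine lintegral_mono fun x ↦ (hVtail _).trans_eq ?_
        rw [← ENNReal.ofReal_mul (exp_nonneg _), ← exp_add]
        ring_nf
    _ = ENNReal.ofReal (exp (-θ * s)) * ∫⁻ ω, ENNReal.ofReal (exp (θ * X ω)) ∂P := by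
        rw [lintegral_const_mul _ hexp, lintegral_map hexp hX]
    _ ≤ ENNReal.ofReal (exp (-θ * s)) := mul_le_of_le_one_right' hmgf

lemma measure_lt_sqWait_le {Z a : ℕ → Ω → ℝ} (hZ : ∀ ν, Measurable (Z ν))
    (ha : ∀ ν, Measurable (a ν)) {θ : ℝ} (hθ : 0 ≤ θ)
    (hind : ∀ n, IndepFun (fun ω ↦ Z n ω - a n ω) (sqWait Z a n) P)
    (hmgf : ∀ n, 1 ≤ n → ∫⁻ ω, ENNReal.ofReal (exp (θ * (Z n ω - a n ω))) ∂P ≤ 1)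
    {n : ℕ} (hn : 1 ≤ n) (s : ℝ) :
    P {ω | s < sqWait Z a n ω} ≤ ENNReal.ofReal (exp (-θ * s)) := by
  induction n, hn using Nat.le_induction generalizing s with
  | base =>
    rcases lt_or_ge s 0 with hs | hs
    · exact measure_le_ofReal_exp_of_nonpos hθ hs.le _
    · simp [sqWait_one, hs.not_gt]
  | succ n hn ih =>
    simp only [sqWait_succ Z a hn]
    exact measure_lt_max_add_le (measurable_sqWait Z a (fun ν _ ↦ hZ ν) fun ν _ ↦ ha ν)
      ((hZ n).sub (ha n)) (hind n) hθ ih (hmgf n hn) s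

lemma lintegral_exp_mul_sub_le_one {X Y : Ω → ℝ} (hX : Measurable X) (hY : Measurable Y)
    (h : IndepFun X Y P) {r θ : ℝ} (hXexp : P.map X = expMeasure r) (hY0 : ∀ ω, 0 ≤ Y ω)
    (hθ : 0 ≤ θ) (hθr : θ < r) (hstab : r / (r - θ) * ∫ ω, exp (-θ * Y ω) ∂P ≤ 1) :
    ∫⁻ ω, ENNReal.ofReal (exp (θ * (X ω - Y ω))) ∂P ≤ 1 := by
  have hexpX : Measurable fun x ↦ ENNReal.ofReal (exp (θ * x)) := by fun_prop
  have hexpY : Measurable fun y ↦ ENNReal.ofReal (exp (-θ * y)) := by fun_prop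
  have hYint : Integrable (fun ω ↦ exp (-θ * Y ω)) P :=
    (integrable_const 1).mono' (by fun_prop) (.of_forall fun ω ↦ by
      rw [norm_of_nonneg (exp_nonneg _), exp_le_one_iff]
      nlinarith [hY0 ω])
  calc ∫⁻ ω, ENNReal.ofReal (exp (θ * (X ω - Y ω))) ∂P
      = ∫⁻ ω, ENNReal.ofReal (exp (θ * X ω)) * ENNReal.ofReal (exp (-θ * Y ω)) ∂P := by
        refine lintegral_congr fun ω ↦ ?_
        rw [← ENNReal.ofReal_mul (exp_nonneg _), ← exp_add]
        ring_nf
    _ = (∫⁻ ω, ENNReal.ofReal (exp (θ * X ω)) ∂P) * ∫⁻ ω, ENNReal.ofReal (exp (-θ * Y ω)) ∂P :=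
        lintegral_mul_eq_lintegral_mul_lintegral_of_indepFun (hexpX.comp hX) (hexpY.comp hY)
          (h.comp hexpX hexpY)
    _ = ENNReal.ofReal (r / (r - θ) * ∫ ω, exp (-θ * Y ω) ∂P) := by
        rw [← lintegral_map hexpX hX, hXexp, lintegral_exp_mul_expMeasure (hθ.trans hθr.le) hθr,
          ← ofReal_integral_eq_lintegral_ofReal hYint (.of_forall fun ω ↦ exp_nonneg _),
          ENNReal.ofReal_mul (div_nonneg (hθ.trans hθr.le) (sub_nonneg.2 hθr.le))]
    _ ≤ 1 := ENNReal.ofReal_le_one.2 hstab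

lemma measure_lt_add_le_of_expMeasure {V L : Ω → ℝ} (hV : Measurable V) (hL : Measurable L)
    (h : IndepFun L V P) {r θ τ : ℝ} (hLexp : P.map L = expMeasure r) (hr : 0 < r)
    (hθr : θ ≠ r) (hτ : 0 ≤ τ) (hVtail : ∀ s, P {ω | s < V ω} ≤ ENNReal.ofReal (exp (-θ * s))) :
    P {ω | τ < V ω + L ω}
      ≤ ENNReal.ofReal (r / (r - θ) * (exp (-θ * τ) - exp (-r * τ)) + exp (-r * τ)) := by
  rw [measure_lt_add_eq_lintegral hV hL h, hLexp]
  exact (lintegral_mono fun x ↦ le_min prob_le_one (hVtail (τ - x))).trans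
    (lintegral_min_one_exp_expMeasure_le hr hθr hτ)

end Tails

theorem single_queue_multiserver_bounds_general
    {Ω : Type*} [MeasurableSpace Ω] (P : Measure Ω) [IsProbabilityMeasure P]
    (k : ℕ) (μ : ℝ) (hμ : 0 < μ)
    (a Z L : ℕ → Ω → ℝ)
    (hameas : ∀ ν, Measurable (a ν)) (hZmeas : ∀ ν, Measurable (Z ν))
    (hLmeas : ∀ n, Measurable (L n))
    (hanonneg : ∀ ν ω, 0 ≤ a ν ω)
    (haiid : iIndepFun a P)
    (haid : ∀ ν, 1 ≤ ν → IdentDistrib (a ν) (a 1) P P)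
    (hZiid : iIndepFun Z P)
    (hZexp : ∀ ν, 1 ≤ ν → P.map (Z ν) = expMeasure ((k : ℝ) * μ))
    (hZa : IndepFun (fun ω (ν : ℕ) => Z ν ω) (fun ω (ν : ℕ) => a ν ω) P)
    (hLexp : ∀ n, 1 ≤ n → P.map (L n) = expMeasure μ)
    (hLW : ∀ n, 1 ≤ n → IndepFun (L n) (sqWait Z a n) P)
    (θ : ℝ) (hθ0 : 0 < θ) (hθk : θ < (k : ℝ) * μ) (hθμ : θ ≠ μ)
    (hstab : ((k : ℝ) * μ / ((k : ℝ) * μ - θ)) * (∫ ω, exp (-θ * a 1 ω) ∂P) ≤ 1) :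
    ∀ n : ℕ, 1 ≤ n → ∀ τ : ℝ, 0 ≤ τ →
      P {ω | τ < sqWait Z a n ω} ≤ ENNReal.ofReal (exp (-θ * τ)) ∧
      P {ω | τ < sqWait Z a n ω + L n ω}
        ≤ ENNReal.ofReal ((μ / (μ - θ)) * (exp (-θ * τ) - exp (-μ * τ)) + exp (-μ * τ)) := by
  have hjoint := iIndepFun_fin_two_prod hZmeas hameas hZa hZiid haiid
  have hmgf : ∀ n, 1 ≤ n → ∫⁻ ω, ENNReal.ofReal (exp (θ * (Z n ω - a n ω))) ∂P ≤ 1 := by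
    intro n hn
    refine lintegral_exp_mul_sub_le_one (hZmeas n) (hameas n)
      (hZa.comp (measurable_pi_apply n) (measurable_pi_apply n)) (hZexp n hn) (hanonneg n)
      hθ0.le hθk ?_
    convert hstab using 2
    exact ((haid n hn).comp (u := fun x ↦ exp (-θ * x)) (by fun_prop)).integral_eq
  have hW := fun n (hn : 1 ≤ n) ↦ measure_lt_sqWait_le hZmeas hameas hθ0.le
    (indepFun_sub_sqWait hZmeas hameas hjoint) hmgf hn
  intro n hn τ hτ
  exact ⟨hW n hn τ, measure_lt_add_le_of_expMeasure
    (measurable_sqWait Z a (fun ν _ ↦ hZmeas ν) fun ν _ ↦ hameas ν) (hLmeas n) (hLW n hn)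
    (hLexp n hn) hμ hθμ hτ (hW n hn)⟩

/-- **Waiting and sojourn time bounds for the single-queue multi-server (GI|M|k) system.**
The inter-arrival times `a` are i.i.d.; the inter-idle times `Z ν` are i.i.d. exponential
with rate `k·μ`, independent of the arrivals; the job service time `L n` is exponential with
rate `μ` and independent of the waiting time `W n`; and `0 < θ < k·μ`, `θ ≠ μ`, with
`(kμ/(kμ-θ)) · E[exp (-θ a 1)] ≤ 1`.  Then `P[W n > τ] ≤ exp (-θ τ)` and, for the sojourn
time `T n = W n + L n`, `P[T n > τ] ≤ (μ/(μ-θ)) (exp (-θ τ) - exp (-μ τ)) + exp (-μ τ)`. -/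
theorem single_queue_multiserver_bounds
    {Ω : Type*} [MeasurableSpace Ω] (P : Measure Ω) [IsProbabilityMeasure P]
    (k : ℕ) (hk : 1 ≤ k) (μ : ℝ) (hμ : 0 < μ)
    (a Z L : ℕ → Ω → ℝ)
    (hameas : ∀ ν, Measurable (a ν)) (hZmeas : ∀ ν, Measurable (Z ν))
    (hLmeas : ∀ n, Measurable (L n))
    (hanonneg : ∀ ν ω, 0 ≤ a ν ω)
    (haiid : iIndepFun a P)
    (haid : ∀ ν, 1 ≤ ν → IdentDistrib (a ν) (a 1) P P)
    (hZiid : iIndepFun Z P)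
    (hZexp : ∀ ν, 1 ≤ ν → P.map (Z ν) = expMeasure ((k : ℝ) * μ))
    (hZa : IndepFun (fun ω (ν : ℕ) => Z ν ω) (fun ω (ν : ℕ) => a ν ω) P)
    (hLexp : ∀ n, 1 ≤ n → P.map (L n) = expMeasure μ)
    (hLW : ∀ n, 1 ≤ n → IndepFun (L n) (sqWait Z a n) P)
    (θ : ℝ) (hθ0 : 0 < θ) (hθk : θ < (k : ℝ) * μ) (hθμ : θ ≠ μ)
    (hstab : ((k : ℝ) * μ / ((k : ℝ) * μ - θ)) * (∫ ω, exp (-θ * a 1 ω) ∂P) ≤ 1) :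
    ∀ n : ℕ, 1 ≤ n → ∀ τ : ℝ, 0 ≤ τ →
      P {ω | τ < sqWait Z a n ω} ≤ ENNReal.ofReal (exp (-θ * τ)) ∧
      P {ω | τ < sqWait Z a n ω + L n ω}
        ≤ ENNReal.ofReal ((μ / (μ - θ)) * (exp (-θ * τ) - exp (-μ * τ)) + exp (-μ * τ)) :=
  single_queue_multiserver_bounds_general P k μ hμ a Z L hameas hZmeas hLmeas hanonneg haiid haid
    hZiid hZexp hZa hLexp hLW θ hθ0 hθk hθμ hstab
end

section
/- Let A : ℕ → ℝ be a nondecreasing sequence of arrival times with A(0) = 0, Q_i(n) ≥ 0 task service times and Z_i(n) ≥ 0 auxiliary times for i ∈ [1,k], n ≥ 1. Define the single-queue fork-join start-of-service times by V_1(1) = A(1), V_i(n) = max{ A(n), V_{i−1}(n) + Z_{i−1}(n) } for n ≥ 1 and i ∈ [2,k], and V_1(n) = max{ A(n), V_k(n−1) + Z_k(n−1) } for n ≥ 2; let the departure of job n be D(n) = max_{i ∈ [1,k]} { V_i(n) + Q_i(n) }. Then for all n ≥ 1 and i ∈ [1,k], V_i(n) = max_{m ∈ [1,n]} { A(m) +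 Σ_{j=1}^{i−1} Z_j(n) + Σ_{ν=m}^{n−1} Σ_{j=1}^{k} Z_j(ν) }, and consequently D(n) = max_{m ∈ [1,n]} { A(m) + S(m,n) } with S(m,n) = max_{i ∈ [1,k]} { Q_i(n) + Σ_{j=1}^{i−1} Z_j(n) + Σ_{ν=m}^{n−1} Σ_{j=1}^{k} Z_j(ν) }; that is, the single-queue fork-join system is an exact S(m,n) server. -/
/-!
Unrolling the recursion one task at a time. The closed form for task `i` of job `n` is a maximum
over the job `m` that opened the current busy period, of `A m` plus all the `Z`-times from the
first task of job `m` up to task `i` of job `n`. Passing to the next task adds the same `Z` to every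
candidate, and the competing arrival `A n` is dominated by the candidate `m = n` because the
`Z`'s are nonnegative; passing to the first task of job `n + 1`, the arrival `A (n + 1)` is
exactly the new candidate `m = n + 1`. The departure formula then only exchanges two maxima.
-/

open Finset

namespace SingleQueueForkJoin

/-- The `Z`-time from the start of task `1` of job `m` to the start of task `i` of job `n`. -/
def cumulativeZ (k : ℕ) (Z : ℕ → ℕ → ℝ) (m n i : ℕ) : ℝ :=
  (∑ j ∈ Icc 1 (i - 1), Z j n) + ∑ ν ∈ Icc m (n - 1), ∑ j ∈ Icc 1 k, Z j ν

variable {k : ℕ} {A : ℕ → ℝ} {Z : ℕ → ℕ → ℝ} {V : ℕ → ℕ → ℝ}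

theorem cumulativeZ_nonneg (hZ : ∀ i n, 0 ≤ Z i n) (m n i : ℕ) : 0 ≤ cumulativeZ k Z m n i :=
  add_nonneg (sum_nonneg fun j _ => hZ j n)
    (sum_nonneg fun ν _ => sum_nonneg fun j _ => hZ j ν)

theorem cumulativeZ_succ_task {i : ℕ} (hi : 1 ≤ i) (m n : ℕ) :
    cumulativeZ k Z m n (i + 1) = cumulativeZ k Z m n i + Z i n := by
  obtain ⟨i, rfl⟩ := Nat.exists_eq_add_of_le' hi
  simp only [cumulativeZ, Nat.add_sub_cancel, sum_Icc_succ_top (Nat.le_add_left 1 i)]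
  ring

theorem cumulativeZ_succ_job (hk : 1 ≤ k) {m n : ℕ} (hmn : m ≤ n) (hn : 1 ≤ n) :
    cumulativeZ k Z m (n + 1) 1 = cumulativeZ k Z m n k + Z k n := by
  obtain ⟨n, rfl⟩ := Nat.exists_eq_add_of_le' hn
  obtain ⟨k, rfl⟩ := Nat.exists_eq_add_of_le' hk
  simp only [cumulativeZ, Nat.add_sub_cancel, Nat.sub_self, Icc_eq_empty_of_lt zero_lt_one,
    sum_empty, zero_add]
  rw [sum_Icc_succ_top hmn, sum_Icc_succ_top (Nat.le_add_left 1 k) fun j => Z j (n + 1)]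
  ring

theorem cumulativeZ_self_first (n : ℕ) : cumulativeZ k Z (n + 1) (n + 1) 1 = 0 := by
  simp [cumulativeZ]

theorem sup'_Icc_succ_top {α : Type*} [SemilatticeSup α] {a n : ℕ} (han : a ≤ n) (f : ℕ → α) :
    (Icc a (n + 1)).sup' (nonempty_Icc.mpr (han.trans n.le_succ)) f
      = f (n + 1) ⊔ (Icc a n).sup' (nonempty_Icc.mpr han) f := by
  rw [← sup'_insert]
  exact sup'_congr _ (insert_Icc_right_eq_Icc_add_one (han.trans n.le_succ)).symm fun _ _ => rfl

theorem start_eq_sup'_of_first (hZ : ∀ i n, 0 ≤ Z i n) {n : ℕ} (hn : 1 ≤ n)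
    (hrec : ∀ i, 2 ≤ i → i ≤ k → V i n = max (A n) (V (i - 1) n + Z (i - 1) n))
    (hfirst : V 1 n = (Icc 1 n).sup' (nonempty_Icc.mpr hn) fun m => A m + cumulativeZ k Z m n 1)
    {i : ℕ} (hi : 1 ≤ i) (hik : i ≤ k) :
    V i n = (Icc 1 n).sup' (nonempty_Icc.mpr hn) fun m => A m + cumulativeZ k Z m n i := by
  induction i, hi using Nat.le_induction with
  | base => exact hfirst
  | succ i hi ih =>
    have hAn : A n ≤ (Icc 1 n).sup' (nonempty_Icc.mpr hn)
        fun m => A m + cumulativeZ k Z m n (i + 1) :=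
      le_sup'_of_le _ (right_mem_Icc.mpr hn) (le_add_of_nonneg_right (cumulativeZ_nonneg hZ ..))
    rw [hrec (i + 1) (by omega) hik, Nat.add_sub_cancel, ih (by omega), sup'_add]
    simp only [cumulativeZ_succ_task hi, ← add_assoc] at hAn ⊢
    exact max_eq_right hAn

theorem start_first_succ_eq_sup' (hk : 1 ≤ k) {n : ℕ} (hn : 1 ≤ n)
    (hrec : V 1 (n + 1) = max (A (n + 1)) (V k n + Z k n))
    (hlast : V k n = (Icc 1 n).sup' (nonempty_Icc.mpr hn) fun m => A m + cumulativeZ k Z m n k) :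
    V 1 (n + 1) = (Icc 1 (n + 1)).sup' (nonempty_Icc.mpr (by omega))
      fun m => A m + cumulativeZ k Z m (n + 1) 1 := by
  rw [sup'_Icc_succ_top hn, cumulativeZ_self_first, add_zero, hrec, hlast, sup'_add]
  congr 1
  refine sup'_congr _ rfl fun m hm => ?_
  rw [cumulativeZ_succ_job hk (mem_Icc.mp hm).2 hn, add_assoc]

theorem start_eq_sup' (hk : 1 ≤ k) (hZ : ∀ i n, 0 ≤ Z i n) (hV11 : V 1 1 = A 1)
    (hVrec1 : ∀ n, 1 ≤ n → ∀ i, 2 ≤ i → i ≤ k →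
      V i n = max (A n) (V (i - 1) n + Z (i - 1) n))
    (hVrec2 : ∀ n, 2 ≤ n → V 1 n = max (A n) (V k (n - 1) + Z k (n - 1)))
    {n : ℕ} (hn : 1 ≤ n) {i : ℕ} (hi : 1 ≤ i) (hik : i ≤ k) :
    V i n = (Icc 1 n).sup' (nonempty_Icc.mpr hn) fun m => A m + cumulativeZ k Z m n i := by
  refine start_eq_sup'_of_first hZ hn (hVrec1 n hn) ?_ hi hik
  induction n, hn using Nat.le_induction with
  | base => simp [hV11, cumulativeZ]
  | succ n hn ih =>
    exact start_first_succ_eq_sup' hk hn (hVrec2 (n + 1) (by omega))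
      (start_eq_sup'_of_first hZ hn (hVrec1 n hn) ih hk le_rfl)

theorem departure_eq_sup' {Q : ℕ → ℕ → ℝ} {n : ℕ} (hk : 1 ≤ k) (hn : 1 ≤ n)
    (hV : ∀ i, 1 ≤ i → i ≤ k →
      V i n = (Icc 1 n).sup' (nonempty_Icc.mpr hn) fun m => A m + cumulativeZ k Z m n i) :
    ((Icc 1 k).sup' (nonempty_Icc.mpr hk) fun i => V i n + Q i n)
      = (Icc 1 n).sup' (nonempty_Icc.mpr hn) fun m =>
          A m + (Icc 1 k).sup' (nonempty_Icc.mpr hk) fun i => Q i n + cumulativeZ k Z m n i := by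
  have hVQ : ∀ i ∈ Icc 1 k, V i n + Q i n = (Icc 1 n).sup' (nonempty_Icc.mpr hn)
      fun m => A m + (Q i n + cumulativeZ k Z m n i) := by
    intro i hi
    rw [hV i (mem_Icc.mp hi).1 (mem_Icc.mp hi).2, sup'_add]
    exact sup'_congr _ rfl fun m _ => by ring
  rw [sup'_congr _ rfl hVQ, Finset.sup'_comm]
  simp only [add_sup']

end SingleQueueForkJoin

theorem single_queue_forkjoin_exact_maxplus_server_general
    (k : ℕ) (hk : 1 ≤ k)
    (A : ℕ → ℝ) (Q Z : ℕ → ℕ → ℝ) (V : ℕ → ℕ → ℝ) (D : ℕ → ℝ)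
    (hZ : ∀ i n, 0 ≤ Z i n)
    (hV11 : V 1 1 = A 1)
    (hVrec1 : ∀ n, 1 ≤ n → ∀ i, 2 ≤ i → i ≤ k →
      V i n = max (A n) (V (i - 1) n + Z (i - 1) n))
    (hVrec2 : ∀ n, 2 ≤ n → V 1 n = max (A n) (V k (n - 1) + Z k (n - 1)))
    (hD : ∀ n, D n = (Finset.Icc 1 k).sup' (Finset.nonempty_Icc.mpr hk)
      (fun i => V i n + Q i n)) :
    ∀ n, ∀ hn : 1 ≤ n,
      (∀ i, 1 ≤ i → i ≤ k →
        V i n = (Finset.Icc 1 n).sup' (Finset.nonempty_Icc.mpr hn)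
          (fun m => A m + ((∑ j ∈ Finset.Icc 1 (i - 1), Z j n)
            + ∑ ν ∈ Finset.Icc m (n - 1), ∑ j ∈ Finset.Icc 1 k, Z j ν))) ∧
      D n = (Finset.Icc 1 n).sup' (Finset.nonempty_Icc.mpr hn)
        (fun m => A m + (Finset.Icc 1 k).sup' (Finset.nonempty_Icc.mpr hk)
          (fun i => Q i n + ((∑ j ∈ Finset.Icc 1 (i - 1), Z j n)
            + ∑ ν ∈ Finset.Icc m (n - 1), ∑ j ∈ Finset.Icc 1 k, Z j ν))) := by
  intro n hn
  have hV := fun i (hi : 1 ≤ i) (hik : i ≤ k) =>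
    SingleQueueForkJoin.start_eq_sup' hk hZ hV11 hVrec1 hVrec2 hn hi hik
  exact ⟨hV, (hD n).trans (SingleQueueForkJoin.departure_eq_sup' hk hn hV)⟩

/-- **A single-queue fork-join system is an exact max-plus server.**
Task `i` of job `n` starts service at `V i n`, following the recursion
`V 1 1 = A 1`, `V i n = max (A n) (V (i-1) n + Z (i-1) n)` for `i ∈ [2,k]`, and
`V 1 n = max (A n) (V k (n-1) + Z k (n-1))` for `n ≥ 2`; job `n` departs at
`D n = max_{i ∈ [1,k]} (V i n + Q i n)`.  Then
`V i n = max_{m ∈ [1,n]} (A m + ∑_{j=1}^{i-1} Z j n + ∑_{ν=m}^{n-1} ∑_{j=1}^{k} Z j ν)`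
and `D n = max_{m ∈ [1,n]} (A m + S m n)` with
`S(m,n) = max_{i ∈ [1,k]} (Q i n + ∑_{j=1}^{i-1} Z j n + ∑_{ν=m}^{n-1} ∑_{j=1}^{k} Z j ν)`. -/
theorem single_queue_forkjoin_exact_maxplus_server
    (k : ℕ) (hk : 1 ≤ k)
    (A : ℕ → ℝ) (Q Z : ℕ → ℕ → ℝ) (V : ℕ → ℕ → ℝ) (D : ℕ → ℝ)
    (hA0 : A 0 = 0) (hAmono : Monotone A)
    (hQ : ∀ i n, 0 ≤ Q i n) (hZ : ∀ i n, 0 ≤ Z i n)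
    (hV11 : V 1 1 = A 1)
    (hVrec1 : ∀ n, 1 ≤ n → ∀ i, 2 ≤ i → i ≤ k →
      V i n = max (A n) (V (i - 1) n + Z (i - 1) n))
    (hVrec2 : ∀ n, 2 ≤ n → V 1 n = max (A n) (V k (n - 1) + Z k (n - 1)))
    (hD : ∀ n, D n = (Finset.Icc 1 k).sup' (Finset.nonempty_Icc.mpr hk)
      (fun i => V i n + Q i n)) :
    ∀ n, ∀ hn : 1 ≤ n,
      (∀ i, 1 ≤ i → i ≤ k →
        V i n = (Finset.Icc 1 n).sup' (Finset.nonempty_Icc.mpr hn)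
          (fun m => A m + ((∑ j ∈ Finset.Icc 1 (i - 1), Z j n)
            + ∑ ν ∈ Finset.Icc m (n - 1), ∑ j ∈ Finset.Icc 1 k, Z j ν))) ∧
      D n = (Finset.Icc 1 n).sup' (Finset.nonempty_Icc.mpr hn)
        (fun m => A m + (Finset.Icc 1 k).sup' (Finset.nonempty_Icc.mpr hk)
          (fun i => Q i n + ((∑ j ∈ Finset.Icc 1 (i - 1), Z j n)
            + ∑ ν ∈ Finset.Icc m (n - 1), ∑ j ∈ Finset.Icc 1 k, Z j ν))) :=
  single_queue_forkjoin_exact_maxplus_server_general k hk A Q Z V D hZ hV11 hVrec1 hVrec2 hD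
end
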